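/- arXiv:2411.09988 — 7 statements merged into one kernel-verified Lean document; each statement's English description precedes it below -/
import Mathlib

section
/- Let p be the transition matrix of an irreducible Markov chain on a countable state space A and fix x ∈ A. Then μ_x(τ_x = ∞) = (E^x[V_x])⁻¹, where E^x[V_x] = ∫ V_x dμ_x ∈ [0,∞] and the inverse is taken in [0,∞] with the convention 1/∞ = 0. In particular, μ_x(τ_x = ∞) = 0 if and only if E^x[V_x] = ∞. -/
open MeasureTheory
open scoped ENNReal

/-- The `n`-step transition probabilities (entries of the `n`-th matrix power of `p`)
on a countable state space. -/
noncomputable def matPow {A : Type*} [DecidableEq A] (p : A → A → ℝ) : ℕ → A → A → ℝ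
  | 0 => fun x y => if x = y then 1 else 0
  | n + 1 => fun x y => ∑' z, matPow p n x z * p z y

/-- `V_y(ω) = #{n ≥ 0 : ω_n = y} ∈ ℕ ∪ {∞}`, the total number of visits of the path `ω`
to the state `y` (as an element of `ℝ≥0∞`). -/
noncomputable def visitCount {A : Type*} (y : A) (ω : ℕ → A) : ℝ≥0∞ :=
  ∑' n : ℕ, ({y} : Set A).indicator (fun _ => 1) (ω n)

/-!
Let `q` be the probability, under `μ x`, of returning to `x` at a positive time. Splitting
according to the time of the first return and applying the Markov property at that time, the
probability of more than `m` returns is `q ^ (m + 1)`. Since the number of returns `N` is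
`ℕ∞`-valued, `E^x[N] = ∑ₘ μ x (N > m)`, so `E^x[V_x] = 1 + ∑ₘ q ^ (m + 1) = (1 - q)⁻¹`, while
`μ x (τ_x = ∞) = 1 - q`. The Markov property at a fixed time holds on cylinders by the product
formula for their measures, and extends to all events because cylinders form a generating
π-system.
-/

open Set

lemma ENat.toENNReal_eq_tsum_indicator (n : ℕ∞) :
    (n : ℝ≥0∞) = ∑' m : ℕ, {m : ℕ | (m : ℝ≥0∞) < n}.indicator (fun _ => 1) m := by
  rw [← tsum_subtype, ENNReal.tsum_set_one]
  induction n using ENat.recTopCoe with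
  | top => simp
  | coe n => simp [Set.Nat.encard_range]

theorem MeasureTheory.lintegral_eq_tsum_measure_lt {Ω : Type*} [MeasurableSpace Ω]
    (ν : Measure Ω) {f : Ω → ℝ≥0∞} (hf : Measurable f) (hnat : ∀ ω, ∃ n : ℕ∞, f ω = n) :
    ∫⁻ ω, f ω ∂ν = ∑' m : ℕ, ν {ω | (m : ℝ≥0∞) < f ω} := by
  have hset : ∀ m : ℕ, MeasurableSet {ω | (m : ℝ≥0∞) < f ω} := fun m =>
    measurableSet_lt measurable_const hf
  calc ∫⁻ ω, f ω ∂ν = ∫⁻ ω, ∑' m : ℕ, {ω | (m : ℝ≥0∞) < f ω}.indicator 1 ω ∂ν := by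
        refine lintegral_congr fun ω => ?_
        obtain ⟨n, hn⟩ := hnat ω
        rw [hn, ENat.toENNReal_eq_tsum_indicator n]
        exact tsum_congr fun m => by simp [indicator_apply, hn]
    _ = ∑' m : ℕ, ∫⁻ ω, {ω | (m : ℝ≥0∞) < f ω}.indicator 1 ω ∂ν :=
        lintegral_tsum fun m => (measurable_one.indicator (hset m)).aemeasurable
    _ = ∑' m : ℕ, ν {ω | (m : ℝ≥0∞) < f ω} := by
        simp_rw [lintegral_indicator_one (hset _)]

namespace PathSpace

variable {A : Type*}

def cylinder (n : ℕ) (a : ℕ → A) : Set (ℕ → A) := {ω | ∀ i ≤ n, ω i = a i}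

def shift (n : ℕ) (ω : ℕ → A) : ℕ → A := fun j => ω (j + n)

def pathPrefix (n : ℕ) (ω : ℕ → A) : Fin (n + 1) → A := fun i => ω i

def cylinders (A : Type*) : Set (Set (ℕ → A)) := {s | ∃ n a, s = cylinder n a}

lemma shift_shift (m n : ℕ) (ω : ℕ → A) : shift m (shift n ω) = shift (m + n) ω := by
  funext j
  simp only [shift, add_assoc]

lemma cylinder_eq_preimage_pathPrefix (n : ℕ) (a : ℕ → A) :
    cylinder n a = pathPrefix n ⁻¹' {pathPrefix n a} := by
  ext ω
  simp [cylinder, pathPrefix, funext_iff, Fin.forall_iff]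

lemma pathPrefix_preimage_singleton_eq {n : ℕ} {b : Fin (n + 1) → A} {ω : ℕ → A}
    (hω : pathPrefix n ω = b) : pathPrefix n ⁻¹' {b} = cylinder n ω := by
  rw [cylinder_eq_preimage_pathPrefix, hω]

lemma cylinder_add (n m : ℕ) (c : ℕ → A) :
    cylinder (n + m) c = cylinder n c ∩ shift n ⁻¹' cylinder m (shift n c) := by
  ext ω
  simp only [cylinder, shift, mem_inter_iff, mem_preimage, mem_ofPred_eq]
  refine ⟨fun h => ⟨fun i hi => h i (by omega), fun j hj => h (j + n) (by omega)⟩,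
    fun ⟨h₁, h₂⟩ i hi => ?_⟩
  rcases le_or_gt i n with hin | hin
  · exact h₁ i hin
  · simpa [Nat.sub_add_cancel hin.le] using h₂ (i - n) (by omega)

lemma cylinder_inter_cylinder_of_le {n m : ℕ} (h : n ≤ m) {a b : ℕ → A}
    (hne : (cylinder n a ∩ cylinder m b).Nonempty) :
    cylinder n a ∩ cylinder m b = cylinder m b := by
  obtain ⟨ω, hωa, hωb⟩ := hne
  refine inter_eq_right.mpr fun ω' hω' i hi => ?_
  rw [hω' i (hi.trans h), ← hωb i (hi.trans h), hωa i hi]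

lemma isPiSystem_cylinders : IsPiSystem (cylinders A) := by
  rintro _ ⟨n, a, rfl⟩ _ ⟨m, b, rfl⟩ hne
  rcases le_total n m with h | h
  · exact ⟨m, b, cylinder_inter_cylinder_of_le h hne⟩
  · rw [inter_comm] at hne ⊢
    exact ⟨n, a, cylinder_inter_cylinder_of_le h hne⟩

/-- Paths whose first visit to `y` after time `0` happens at time `k + 1`. -/
def firstReturnAt (y : A) (k : ℕ) : Set (ℕ → A) :=
  {ω | (∀ j < k, ω (j + 1) ≠ y) ∧ ω (k + 1) = y}

lemma pairwise_disjoint_firstReturnAt (y : A) :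
    Pairwise (Function.onFun Disjoint (firstReturnAt y)) :=
  (pairwise_disjoint_on _).mpr fun _ _ hlt =>
    disjoint_left.mpr fun _ hk hk' => hk'.1 _ hlt hk.2

lemma exists_mem_firstReturnAt {y : A} {ω : ℕ → A} (h : ∃ j, ω (j + 1) = y) :
    ∃ k, ω ∈ firstReturnAt y k := by
  classical
  exact ⟨Nat.find h, fun j hj => Nat.find_min h hj, Nat.find_spec h⟩

lemma compl_iUnion_firstReturnAt (y : A) :
    (⋃ k, firstReturnAt y k)ᶜ = {ω | ∀ k, 1 ≤ k → ω k ≠ y} := by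
  ext ω
  simp only [mem_compl_iff, mem_iUnion, not_exists, mem_ofPred_eq]
  refine ⟨fun h k hk hky => ?_, fun h k hω => h (k + 1) k.succ_pos hω.2⟩
  obtain ⟨k', hk'⟩ :=
    exists_mem_firstReturnAt (y := y) (ω := ω) ⟨k - 1, by rwa [Nat.sub_add_cancel hk]⟩
  exact h k' hk'

lemma cylinder_subset_firstReturnAt {y : A} {k : ℕ} {ω : ℕ → A}
    (hω : ω ∈ firstReturnAt y k) : cylinder (k + 1) ω ⊆ firstReturnAt y k := fun ω' hω' =>
  ⟨fun j hj => hω' (j + 1) (by omega) ▸ hω.1 j hj, hω' (k + 1) le_rfl ▸ hω.2⟩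

noncomputable def returnCount (y : A) (ω : ℕ → A) : ℝ≥0∞ := visitCount y (shift 1 ω)

lemma visitCount_eq_sum_add_visitCount_shift (y : A) (ω : ℕ → A) (n : ℕ) :
    visitCount y ω =
      ∑ i ∈ Finset.range n, ({y} : Set A).indicator (fun _ => 1) (ω i) +
        visitCount y (shift n ω) :=
  (Summable.sum_add_tsum_nat_add' ENNReal.summable).symm

lemma visitCount_eq_encard (y : A) (ω : ℕ → A) : visitCount y ω = (ω ⁻¹' {y}).encard := by
  rw [← ENNReal.tsum_set_one, tsum_subtype (ω ⁻¹' {y}) fun _ => 1]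
  rfl

lemma returnCount_eq_zero {y : A} {ω : ℕ → A} (h : ∀ j, ω (j + 1) ≠ y) :
    returnCount y ω = 0 :=
  ENNReal.tsum_eq_zero.mpr fun j => indicator_of_notMem (s := {y}) (h j) _

lemma returnCount_of_mem_firstReturnAt {y : A} {k : ℕ} {ω : ℕ → A}
    (hω : ω ∈ firstReturnAt y k) : returnCount y ω = 1 + returnCount y (shift (k + 1) ω) := by
  have hfirst : ∑ j ∈ Finset.range (k + 1),
      ({y} : Set A).indicator (fun _ => (1 : ℝ≥0∞)) (shift 1 ω j) = 1 := by
    rw [Finset.sum_range_succ, Finset.sum_eq_zero fun j hj => ?_, zero_add]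
    · exact indicator_of_mem (s := {y}) hω.2 1
    · exact indicator_of_notMem (s := {y}) (hω.1 j (Finset.mem_range.mp hj)) 1
  rw [returnCount, visitCount_eq_sum_add_visitCount_shift y _ (k + 1), hfirst, returnCount,
    shift_shift, shift_shift, add_comm 1 (k + 1)]

lemma setOf_lt_returnCount (y : A) (t : ℝ≥0∞) :
    {ω | t < returnCount y ω} =
      ⋃ k, firstReturnAt y k ∩ shift (k + 1) ⁻¹' {ω | t < 1 + returnCount y ω} := by
  ext ω
  simp only [mem_ofPred_eq, mem_iUnion, mem_inter_iff, mem_preimage]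
  constructor
  · intro ht
    have hreturn : ∃ j, ω (j + 1) = y := by
      by_contra! h
      simp [returnCount_eq_zero h] at ht
    obtain ⟨k, hk⟩ := exists_mem_firstReturnAt hreturn
    exact ⟨k, hk, returnCount_of_mem_firstReturnAt hk ▸ ht⟩
  · rintro ⟨k, hk, ht⟩
    rwa [returnCount_of_mem_firstReturnAt hk]

section Measurable

variable [MeasurableSpace A]

lemma measurable_shift (n : ℕ) : Measurable (shift (A := A) n) :=
  measurable_pi_lambda _ fun j => measurable_pi_apply (j + n)

lemma measurable_pathPrefix (n : ℕ) : Measurable (pathPrefix (A := A) n) :=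
  measurable_pi_lambda _ fun i => measurable_pi_apply (i : ℕ)

variable [MeasurableSingletonClass A]

lemma measurable_visitCount (y : A) : Measurable (visitCount (A := A) y) :=
  Measurable.tsum fun n =>
    (measurable_const.indicator (measurableSet_singleton y)).comp (measurable_pi_apply n)

lemma measurable_returnCount (y : A) : Measurable (returnCount (A := A) y) :=
  (measurable_visitCount y).comp (measurable_shift 1)

variable [Countable A]

lemma measurableSet_pathPrefix_preimage (n : ℕ) (s : Set (Fin (n + 1) → A)) :
    MeasurableSet (pathPrefix n ⁻¹' s) :=
  measurable_pathPrefix n s.to_countable.measurableSet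

lemma measurableSet_cylinder (n : ℕ) (a : ℕ → A) : MeasurableSet (cylinder n a) := by
  rw [cylinder_eq_preimage_pathPrefix]
  exact measurableSet_pathPrefix_preimage n _

lemma measurableSet_of_cylinder_subset {n : ℕ} {S : Set (ℕ → A)}
    (hS : ∀ ω ∈ S, cylinder n ω ⊆ S) : MeasurableSet S := by
  suffices S = pathPrefix n ⁻¹' (pathPrefix n '' S) from
    this ▸ measurableSet_pathPrefix_preimage n _
  refine (subset_preimage_image _ _).antisymm fun ω' ⟨ω, hω, hωω'⟩ => hS ω hω ?_
  rw [cylinder_eq_preimage_pathPrefix]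
  exact hωω'.symm

lemma measurableSet_firstReturnAt (y : A) (k : ℕ) : MeasurableSet (firstReturnAt y k) :=
  measurableSet_of_cylinder_subset fun _ => cylinder_subset_firstReturnAt

lemma generateFrom_cylinders :
    MeasurableSpace.generateFrom (cylinders A) = MeasurableSpace.pi := by
  refine le_antisymm (MeasurableSpace.generateFrom_le ?_) ?_
  · rintro _ ⟨n, a, rfl⟩
    exact measurableSet_cylinder n a
  refine iSup_le fun i => MeasurableSpace.comap_le_iff_le_map.mpr fun s _ => ?_
  have hfibers : (fun ω : ℕ → A => ω i) ⁻¹' s =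
      ⋃ b ∈ {b : Fin (i + 1) → A | b (Fin.last i) ∈ s}, pathPrefix i ⁻¹' {b} := by
    rw [Set.biUnion_preimage_singleton]
    rfl
  change MeasurableSet[MeasurableSpace.generateFrom (cylinders A)]
    ((fun ω : ℕ → A => ω i) ⁻¹' s)
  rw [hfibers]
  refine MeasurableSet.biUnion (m := MeasurableSpace.generateFrom _) (to_countable _)
    fun b _ => ?_
  rcases (pathPrefix i ⁻¹' {b}).eq_empty_or_nonempty with h | ⟨ω, hω⟩
  · rw [h]
    exact @MeasurableSet.empty _ (MeasurableSpace.generateFrom _)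
  · rw [pathPrefix_preimage_singleton_eq hω]
    exact MeasurableSpace.measurableSet_generateFrom ⟨i, ω, rfl⟩

lemma ext_of_cylinder {ν₁ ν₂ : Measure (ℕ → A)} [IsFiniteMeasure ν₁]
    (h : ∀ n a, ν₁ (cylinder n a) = ν₂ (cylinder n a)) (huniv : ν₁ univ = ν₂ univ) :
    ν₁ = ν₂ :=
  ext_of_generate_finite _ generateFrom_cylinders.symm isPiSystem_cylinders
    (by rintro _ ⟨n, a, rfl⟩; exact h n a) huniv

lemma measure_eq_tsum_inter_pathPrefix_fiber (ν : Measure (ℕ → A)) (n : ℕ)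
    (W : Set (ℕ → A)) : ν W = ∑' b : Fin (n + 1) → A, ν (pathPrefix n ⁻¹' {b} ∩ W) := by
  have hsum := tsum_measure_preimage_singleton (μ := ν.restrict W) (s := univ) (to_countable _)
    fun b _ => measurableSet_pathPrefix_preimage n {b}
  rw [tsum_univ fun b => ν.restrict W (pathPrefix n ⁻¹' {b}), preimage_univ,
    Measure.restrict_apply_univ] at hsum
  simp_rw [Measure.restrict_apply (measurableSet_pathPrefix_preimage n _)] at hsum
  exact hsum.symm

end Measurable

section Markov

variable [MeasurableSpace A] [DecidableEq A]

def IsMarkovLaw (p : A → A → ℝ) (μ : A → Measure (ℕ → A)) : Prop :=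
  ∀ (x : A) (n : ℕ) (a : ℕ → A), μ x (cylinder n a) =
    ENNReal.ofReal ((if a 0 = x then (1 : ℝ) else 0) * ∏ i ∈ Finset.range n, p (a i) (a (i + 1)))

namespace IsMarkovLaw

variable {p : A → A → ℝ} {μ : A → Measure (ℕ → A)}

lemma measure_cylinder_add (hμ : IsMarkovLaw p μ) (hnn : ∀ x y, 0 ≤ p x y)
    (x : A) (n m : ℕ) (c : ℕ → A) :
    μ x (cylinder (n + m) c) = μ x (cylinder n c) * μ (c n) (cylinder m (shift n c)) := by
  rw [hμ, hμ, hμ, Finset.prod_range_add, ← mul_assoc,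
    ENNReal.ofReal_mul (mul_nonneg (by positivity) (Finset.prod_nonneg fun i _ => hnn _ _))]
  congr 2
  simp only [shift, zero_add, if_true, one_mul]
  exact Finset.prod_congr rfl fun i _ => by rw [add_comm i n, add_comm (i + 1) n, add_assoc]

lemma measure_cylinder_inter_shift_cylinder (hμ : IsMarkovLaw p μ) (hnn : ∀ x y, 0 ≤ p x y)
    (x : A) (n : ℕ) (a : ℕ → A) (m : ℕ) (b : ℕ → A) :
    μ x (cylinder n a ∩ shift n ⁻¹' cylinder m b) =
      μ x (cylinder n a) * μ (a n) (cylinder m b) := by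
  by_cases hb : b 0 = a n
  · set c : ℕ → A := fun i => if i ≤ n then a i else b (i - n)
    have hca : cylinder n c = cylinder n a := by
      ext ω
      simp +contextual [cylinder, c]
    have hcb : shift n c = b := by
      funext j
      rcases j with _ | j
      · simp [shift, c, hb]
      · simp [shift, c]
    have hcn : c n = a n := if_pos le_rfl
    have hadd := hμ.measure_cylinder_add hnn x n m c
    rwa [cylinder_add, hcb, hca, hcn] at hadd
  · have hempty : cylinder n a ∩ shift n ⁻¹' cylinder m b = ∅ :=
      eq_empty_of_forall_notMem fun ω ⟨ha, hb'⟩ =>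
        hb ((hb' 0 (Nat.zero_le m)).symm.trans (by simpa [shift] using ha n le_rfl))
    rw [hempty, measure_empty, hμ (a n) m b, if_neg hb]
    simp

variable [Countable A] [MeasurableSingletonClass A] [∀ x, IsProbabilityMeasure (μ x)]

lemma measure_cylinder_inter_shift_preimage (hμ : IsMarkovLaw p μ) (hnn : ∀ x y, 0 ≤ p x y)
    (x : A) (n : ℕ) (a : ℕ → A) {E : Set (ℕ → A)} (hE : MeasurableSet E) :
    μ x (cylinder n a ∩ shift n ⁻¹' E) = μ x (cylinder n a) * μ (a n) E := by
  have hmap : ∀ F, MeasurableSet F →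
      ((μ x).restrict (cylinder n a)).map (shift n) F = μ x (cylinder n a ∩ shift n ⁻¹' F) :=
    fun F hF => by
      rw [Measure.map_apply (measurable_shift n) hF,
        Measure.restrict_apply (measurable_shift n hF), inter_comm]
  have hlaw : ((μ x).restrict (cylinder n a)).map (shift n) = μ x (cylinder n a) • μ (a n) := by
    refine ext_of_cylinder (fun m b => ?_) ?_
    · rw [hmap _ (measurableSet_cylinder m b), Measure.smul_apply, smul_eq_mul,
        hμ.measure_cylinder_inter_shift_cylinder hnn]
    · rw [hmap _ MeasurableSet.univ, Measure.smul_apply, smul_eq_mul, preimage_univ, inter_univ,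
        measure_univ, mul_one]
  rw [← hmap E hE, hlaw, Measure.smul_apply, smul_eq_mul]

theorem measure_inter_shift_preimage (hμ : IsMarkovLaw p μ) (hnn : ∀ x y, 0 ≤ p x y)
    {x y : A} {n : ℕ} {S : Set (ℕ → A)} (hS : ∀ ω ∈ S, cylinder n ω ⊆ S)
    (hSy : ∀ ω ∈ S, ω n = y) {E : Set (ℕ → A)} (hE : MeasurableSet E) :
    μ x (S ∩ shift n ⁻¹' E) = μ x S * μ y E := by
  rw [measure_eq_tsum_inter_pathPrefix_fiber (μ x) n,
    measure_eq_tsum_inter_pathPrefix_fiber (μ x) n S, ← ENNReal.tsum_mul_right]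
  refine tsum_congr fun b => ?_
  rcases (pathPrefix n ⁻¹' {b} ∩ S).eq_empty_or_nonempty with h | ⟨ω, hωb, hωS⟩
  · rw [← inter_assoc, h, empty_inter, measure_empty, zero_mul]
  · rw [← inter_assoc, pathPrefix_preimage_singleton_eq hωb, inter_eq_left.mpr (hS ω hωS),
      ← hSy ω hωS]
    exact hμ.measure_cylinder_inter_shift_preimage hnn x n ω hE

lemma measure_iUnion_firstReturnAt_inter_shift (hμ : IsMarkovLaw p μ)
    (hnn : ∀ x y, 0 ≤ p x y) (x y : A) {E : Set (ℕ → A)} (hE : MeasurableSet E) :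
    μ x (⋃ k, firstReturnAt y k ∩ shift (k + 1) ⁻¹' E) =
      μ x (⋃ k, firstReturnAt y k) * μ y E := by
  have hdisj := pairwise_disjoint_firstReturnAt y
  rw [measure_iUnion (hdisj.mono fun _ _ h => h.mono inter_subset_left inter_subset_left)
      fun k => (measurableSet_firstReturnAt y k).inter (measurable_shift _ hE),
    measure_iUnion hdisj (measurableSet_firstReturnAt y), ← ENNReal.tsum_mul_right]
  exact tsum_congr fun k => hμ.measure_inter_shift_preimage hnn
    (fun _ => cylinder_subset_firstReturnAt) (fun _ hω => hω.2) hE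

lemma measure_lt_returnCount (hμ : IsMarkovLaw p μ) (hnn : ∀ x y, 0 ≤ p x y) (x : A) (m : ℕ) :
    μ x {ω | (m : ℝ≥0∞) < returnCount x ω} = μ x (⋃ k, firstReturnAt x k) ^ (m + 1) := by
  have hmeas : ∀ t, MeasurableSet {ω | t < 1 + returnCount x ω} := fun t =>
    measurableSet_lt measurable_const (measurable_const.add (measurable_returnCount x))
  induction m with
  | zero =>
    rw [setOf_lt_returnCount, hμ.measure_iUnion_firstReturnAt_inter_shift hnn x x (hmeas _)]
    simp
  | succ m ih =>
    rw [setOf_lt_returnCount, hμ.measure_iUnion_firstReturnAt_inter_shift hnn x x (hmeas _)]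
    have hshift : {ω | ((m + 1 : ℕ) : ℝ≥0∞) < 1 + returnCount x ω} =
        {ω | (m : ℝ≥0∞) < returnCount x ω} := by
      ext ω
      rw [mem_ofPred_eq, mem_ofPred_eq, Nat.cast_succ, add_comm _ 1,
        ENNReal.add_lt_add_iff_left ENNReal.one_ne_top]
    rw [hshift, ih, pow_succ' _ (m + 1)]

lemma lintegral_visitCount (hμ : IsMarkovLaw p μ) (hnn : ∀ x y, 0 ≤ p x y) (x : A) :
    ∫⁻ ω, visitCount x ω ∂μ x = (1 - μ x (⋃ k, firstReturnAt x k))⁻¹ := by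
  set q := μ x (⋃ k, firstReturnAt x k)
  have hstart_meas :
      Measurable fun ω : ℕ → A => ({x} : Set A).indicator (fun _ => (1 : ℝ≥0∞)) (ω 0) :=
    (measurable_const.indicator (measurableSet_singleton x)).comp (measurable_pi_apply 0)
  have hstart : ∫⁻ ω, ({x} : Set A).indicator (fun _ => 1) (ω 0) ∂μ x = 1 := by
    have hcyl : (fun ω : ℕ → A => ({x} : Set A).indicator (fun _ => (1 : ℝ≥0∞)) (ω 0)) =
        (cylinder 0 fun _ => x).indicator 1 := by
      ext ω
      simp [cylinder, indicator_apply]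
    rw [hcyl, lintegral_indicator_one (measurableSet_cylinder _ _), hμ]
    simp
  have hreturns : ∫⁻ ω, returnCount x ω ∂μ x = ∑' m : ℕ, q ^ (m + 1) := by
    rw [lintegral_eq_tsum_measure_lt _ (measurable_returnCount x)
      fun ω => ⟨_, visitCount_eq_encard x _⟩]
    exact tsum_congr (hμ.measure_lt_returnCount hnn x)
  calc ∫⁻ ω, visitCount x ω ∂μ x
      = ∫⁻ ω, ({x} : Set A).indicator (fun _ => 1) (ω 0) + returnCount x ω ∂μ x := by
        refine lintegral_congr fun ω => ?_
        rw [visitCount_eq_sum_add_visitCount_shift x ω 1, Finset.sum_range_one]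
        rfl
    _ = 1 + ∑' m : ℕ, q ^ (m + 1) := by
        rw [lintegral_add_left hstart_meas, hstart, hreturns]
    _ = ∑' m : ℕ, q ^ m := by
        rw [tsum_eq_zero_add' (f := fun m => q ^ m) ENNReal.summable, pow_zero]
    _ = (1 - q)⁻¹ := ENNReal.tsum_geometric q

end IsMarkovLaw

end Markov

end PathSpace

theorem stmt_0_general {A : Type*} [Countable A] [DecidableEq A]
    [MeasurableSpace A] [MeasurableSingletonClass A]
    (p : A → A → ℝ)
    (hnn : ∀ x y, 0 ≤ p x y)
    (μ : A → Measure (ℕ → A)) (hprob : ∀ x, IsProbabilityMeasure (μ x))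
    (hμ : ∀ (x : A) (n : ℕ) (a : ℕ → A),
      μ x {ω | ∀ i ≤ n, ω i = a i} =
        ENNReal.ofReal ((if a 0 = x then (1 : ℝ) else 0) *
          ∏ i ∈ Finset.range n, p (a i) (a (i + 1))))
    (x : A) :
    μ x {ω | ∀ k : ℕ, 1 ≤ k → ω k ≠ x} = (∫⁻ ω, visitCount x ω ∂μ x)⁻¹ ∧
    (μ x {ω | ∀ k : ℕ, 1 ≤ k → ω k ≠ x} = 0 ↔ (∫⁻ ω, visitCount x ω ∂μ x) = ⊤) := by
  have := hprob
  have hescape : μ x {ω | ∀ k : ℕ, 1 ≤ k → ω k ≠ x} = (∫⁻ ω, visitCount x ω ∂μ x)⁻¹ := by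
    rw [PathSpace.IsMarkovLaw.lintegral_visitCount hμ hnn x, inv_inv,
      ← PathSpace.compl_iUnion_firstReturnAt,
      measure_compl (.iUnion (PathSpace.measurableSet_firstReturnAt x)) (measure_ne_top _ _),
      measure_univ]
  exact ⟨hescape, by rw [hescape, ENNReal.inv_eq_zero]⟩

/-- For an irreducible Markov chain with stochastic transition matrix `p` on a
countable state space `A`, whose laws `μ_x` (started at `x`) are characterized by the usual
finite-dimensional (cylinder) formula, one has for every `x ∈ A`:
`μ_x(τ_x = ∞) = (E^x[V_x])⁻¹` (inverse in `[0,∞]`, with `1/∞ = 0`); in particular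
`μ_x(τ_x = ∞) = 0 ↔ E^x[V_x] = ∞`. Here `τ_x = inf{k ≥ 1 : X_k = x}` and
`E^x[V_x] = ∫ V_x dμ_x`. -/
theorem stmt_0 {A : Type*} [Countable A] [Nonempty A] [DecidableEq A]
    [MeasurableSpace A] [MeasurableSingletonClass A]
    (p : A → A → ℝ)
    (hnn : ∀ x y, 0 ≤ p x y) (hrow : ∀ x, HasSum (p x) 1)
    (μ : A → Measure (ℕ → A)) (hprob : ∀ x, IsProbabilityMeasure (μ x))
    (hμ : ∀ (x : A) (n : ℕ) (a : ℕ → A),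
      μ x {ω | ∀ i ≤ n, ω i = a i} =
        ENNReal.ofReal ((if a 0 = x then (1 : ℝ) else 0) *
          ∏ i ∈ Finset.range n, p (a i) (a (i + 1))))
    (hirr : ∀ x y : A, ∃ n : ℕ, 0 < matPow p n x y)
    (x : A) :
    μ x {ω | ∀ k : ℕ, 1 ≤ k → ω k ≠ x} = (∫⁻ ω, visitCount x ω ∂μ x)⁻¹ ∧
    (μ x {ω | ∀ k : ℕ, 1 ≤ k → ω k ≠ x} = 0 ↔ (∫⁻ ω, visitCount x ω ∂μ x) = ⊤) :=
  stmt_0_general p hnn μ hprob hμ x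
end

section
/- Let p be the transition matrix of an irreducible Markov chain on a countable state space A. Then the following are equivalent: (1) the chain is recurrent, i.e. μ_y(τ_x < ∞) = 1 for all x,y ∈ A; (2) for every x,y ∈ A, E^x[V_y] = ∞; (3) there exist x,y ∈ A with E^x[V_y] = ∞; (4) for every x,y ∈ A, μ_x(V_y = ∞) = 1; (5) there exist x,y ∈ A with μ_x(V_y = ∞) = 1. -/
open MeasureTheory
open scoped ENNReal

/-!
Write `f(x, y) = μ_x(τ_y < ∞)`. By the Markov property at the first return time, under `μ_x`
the chain returns to `y` more than `m` times with probability `f(x, y) f(y, y)^m`. Summing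
over `m` gives `E^x[V_y] = μ_x(X_0 = y) + f(x, y) / (1 - f(y, y))`, so `E^x[V_y] = ∞` forces
`f(y, y) = 1`; letting `m → ∞` gives `μ_x(V_y = ∞) = 1` as soon as `f(y, y) = f(x, y) = 1`.
Irreducibility spreads `f(y, y) = 1` to every state `b` through the bound
`G(b, b) ≥ p_i(b, y) G(y, y) p_j(y, b)` on the Green function `G(x, y) = E^x[V_y]`, and a
recurrent state `a` is hit almost surely from every `c`: otherwise, with positive probability,
the chain started at `a` would reach `c` and never come back to `a`. The Markov property at
fixed times follows from the cylinder formula by a π-system argument.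
-/

open Finset Function

lemma ENat.toENNReal_eq_tsum_ite (N : ℕ∞) :
    (N : ℝ≥0∞) = ∑' m : ℕ, if (m : ℝ≥0∞) < N then 1 else 0 := by
  induction N using ENat.recTopCoe with
  | top => simp
  | coe k =>
    rw [tsum_eq_sum (s := range k) fun m hm => by simp_all,
      sum_congr rfl fun m hm => if_pos (by simpa using mem_range.1 hm)]
    simp

namespace MarkovChain

variable {A : Type*}

section Paths

def cyl (n : ℕ) (a : ℕ → A) : Set (ℕ → A) := {ω | ∀ i ≤ n, ω i = a i}

def shift (k : ℕ) (ω : ℕ → A) : ℕ → A := fun i => ω (i + k)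

def DeterminedUpTo (n : ℕ) (S : Set (ℕ → A)) : Prop :=
  ∀ ω ω', (∀ i ≤ n, ω i = ω' i) → ω ∈ S → ω' ∈ S

def extend (n : ℕ) (b : Fin (n + 1) → A) : ℕ → A := fun i => b ⟨min i n, by omega⟩

def glue (k : ℕ) (a b : ℕ → A) : ℕ → A := fun i => if i ≤ k then a i else b (i - k)

lemma shift_shift (m n : ℕ) (ω : ℕ → A) : shift m (shift n ω) = shift (m + n) ω := by
  funext i
  simp only [shift, add_assoc]

lemma extend_of_le {n : ℕ} (b : Fin (n + 1) → A) {i : ℕ} (hi : i ≤ n) :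
    extend n b i = b ⟨i, by omega⟩ := by
  simp [extend, Nat.min_eq_left hi]

lemma mem_cyl_extend_self (n : ℕ) (ω : ℕ → A) : ω ∈ cyl n (extend n fun i => ω i) :=
  fun i hi => by rw [extend_of_le _ hi]

lemma disjoint_cyl_extend {n : ℕ} {b b' : Fin (n + 1) → A} (h : b ≠ b') :
    Disjoint (cyl n (extend n b)) (cyl n (extend n b')) := by
  refine Set.disjoint_left.2 fun ω hω hω' => h (funext fun i => ?_)
  have h₁ := hω i i.is_le
  have h₂ := hω' i i.is_le
  rw [extend_of_le _ i.is_le] at h₁ h₂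
  exact h₁.symm.trans h₂

lemma DeterminedUpTo.eq_iUnion_cyl {n : ℕ} {S : Set (ℕ → A)} (hS : DeterminedUpTo n S) :
    S = ⋃ b : {b : Fin (n + 1) → A // extend n b ∈ S}, cyl n (extend n b) := by
  ext ω
  refine ⟨fun hω => Set.mem_iUnion.2 ⟨⟨_, ?_⟩, mem_cyl_extend_self n ω⟩, fun hω => ?_⟩
  · exact hS ω _ (mem_cyl_extend_self n ω) hω
  · obtain ⟨b, hb⟩ := Set.mem_iUnion.1 hω
    exact hS _ ω (fun i hi => (hb i hi).symm) b.2

lemma glue_of_le (k : ℕ) (a b : ℕ → A) {i : ℕ} (hi : i ≤ k) : glue k a b i = a i := by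
  simp [glue, hi]

lemma glue_add_left {k : ℕ} {a b : ℕ → A} (hb : b 0 = a k) (j : ℕ) : glue k a b (k + j) = b j := by
  rcases Nat.eq_zero_or_pos j with rfl | hj
  · rw [add_zero, glue_of_le _ _ _ le_rfl, hb]
  · simp [glue, show ¬ k + j ≤ k by omega]

lemma cyl_inter_shift_cyl {k m : ℕ} {a b : ℕ → A} (hb : b 0 = a k) :
    cyl k a ∩ shift k ⁻¹' cyl m b = cyl (k + m) (glue k a b) := by
  ext ω
  refine ⟨fun ⟨h₁, h₂⟩ i hi => ?_, fun h => ⟨fun i hi => ?_, fun j hj => ?_⟩⟩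
  · by_cases hik : i ≤ k
    · rw [glue_of_le _ _ _ hik, h₁ i hik]
    · obtain ⟨j, rfl⟩ := Nat.exists_eq_add_of_le (le_of_not_ge hik)
      rw [glue_add_left hb, ← h₂ j (by omega), shift, add_comm]
  · rw [h i (by omega), glue_of_le _ _ _ hi]
  · rw [shift, add_comm, h (k + j) (by omega), glue_add_left hb]

lemma cyl_inter_shift_cyl_of_ne {k m : ℕ} {a b : ℕ → A} (hb : b 0 ≠ a k) :
    cyl k a ∩ shift k ⁻¹' cyl m b = ∅ :=
  Set.eq_empty_of_forall_notMem fun ω ⟨h₁, h₂⟩ =>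
    hb ((h₂ 0 (Nat.zero_le _)).symm.trans (by simpa [shift] using h₁ k le_rfl))

lemma isPiSystem_cyl : IsPiSystem {S : Set (ℕ → A) | ∃ n a, S = cyl n a} := by
  have key : ∀ {n m : ℕ} (a b : ℕ → A), n ≤ m → (cyl n a ∩ cyl m b).Nonempty →
      cyl n a ∩ cyl m b = cyl m b := by
    rintro n m a b hnm ⟨ω, hωa, hωb⟩
    refine Set.inter_eq_self_of_subset_right fun ω' hω' i hi => ?_
    rw [hω' i (hi.trans hnm), ← hωb i (hi.trans hnm), hωa i hi]
  rintro _ ⟨n, a, rfl⟩ _ ⟨m, b, rfl⟩ hne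
  rcases le_total n m with h | h
  · exact ⟨m, b, key a b h hne⟩
  · rw [Set.inter_comm] at hne ⊢
    exact ⟨n, a, key b a h hne⟩

end Paths

section Visits

def hitSet (y : A) : Set (ℕ → A) := {ω | ∃ k, 1 ≤ k ∧ ω k = y}

def firstHitAt (y : A) (n : ℕ) : Set (ℕ → A) := {ω | ω n = y ∧ ∀ j, 1 ≤ j → j < n → ω j ≠ y}

noncomputable def returnCount (y : A) (ω : ℕ → A) : ℝ≥0∞ := visitCount y (shift 1 ω)

lemma determinedUpTo_firstHitAt (y : A) (n : ℕ) : DeterminedUpTo n (firstHitAt y n) :=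
  fun _ _ h ⟨hn, hbefore⟩ =>
    ⟨h n le_rfl ▸ hn, fun j hj₁ hj₂ => h j hj₂.le ▸ hbefore j hj₁ hj₂⟩

lemma hitSet_eq_iUnion_firstHitAt (y : A) : hitSet y = ⋃ k, firstHitAt y (k + 1) := by
  classical
  ext ω
  refine ⟨fun hω => ?_, fun hω => ?_⟩
  · have hK := Nat.find_spec hω
    refine Set.mem_iUnion.2 ⟨Nat.find hω - 1, ?_, fun j hj₁ hj₂ hj => ?_⟩
    · rw [Nat.sub_add_cancel hK.1]
      exact hK.2
    · exact Nat.find_min hω (by omega) ⟨hj₁, hj⟩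
  · obtain ⟨k, hk, -⟩ := Set.mem_iUnion.1 hω
    exact ⟨k + 1, by omega, hk⟩

lemma pairwise_disjoint_firstHitAt (y : A) :
    Pairwise (Disjoint on fun k => firstHitAt y (k + 1)) :=
  (pairwise_disjoint_on _).2 fun k _ hlt =>
    Set.disjoint_left.2 fun _ hω hω' => hω'.2 (k + 1) (by omega) (by omega) hω.1

lemma visitCount_eq_sum_add_shift (y : A) (ω : ℕ → A) (k : ℕ) :
    visitCount y ω =
      ∑ i ∈ range k, ({y} : Set A).indicator (fun _ => 1) (ω i) + visitCount y (shift k ω) :=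
  (Summable.sum_add_tsum_nat_add' (k := k) ENNReal.summable).symm

lemma visitCount_shift_eq_top_iff (y : A) (ω : ℕ → A) (k : ℕ) :
    visitCount y (shift k ω) = ⊤ ↔ visitCount y ω = ⊤ := by
  have hfin : ∑ i ∈ range k, ({y} : Set A).indicator (fun _ => (1 : ℝ≥0∞)) (ω i) ≠ ⊤ :=
    ENNReal.sum_ne_top.2 fun i _ => by by_cases h : ω i = y <;> simp [h]
  rw [visitCount_eq_sum_add_shift y ω k, ENNReal.add_eq_top, or_iff_right hfin]

lemma returnCount_eq_zero_iff (y : A) (ω : ℕ → A) : returnCount y ω = 0 ↔ ω ∉ hitSet y := by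
  simp only [returnCount, visitCount, shift, ENNReal.tsum_eq_zero, Set.indicator_apply_eq_zero,
    Set.mem_singleton_iff, one_ne_zero, imp_false]
  constructor
  · rintro h ⟨k, hk, hky⟩
    exact h (k - 1) (by rwa [Nat.sub_add_cancel hk])
  · exact fun h i hi => h ⟨i + 1, by omega, hi⟩

lemma returnCount_eq_one_add {y : A} {ω : ℕ → A} {k : ℕ} (h : ω ∈ firstHitAt y (k + 1)) :
    returnCount y ω = 1 + returnCount y (shift (k + 1) ω) := by
  have hnone : ∑ i ∈ range k, ({y} : Set A).indicator (fun _ => (1 : ℝ≥0∞)) (shift 1 ω i) = 0 :=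
    sum_eq_zero fun i hi => Set.indicator_of_notMem (s := {y}) (h.2 (i + 1) (by omega)
      (by simpa using mem_range.1 hi)) _
  rw [returnCount, visitCount_eq_sum_add_shift y _ k, hnone, zero_add, shift_shift,
    visitCount_eq_sum_add_shift y _ 1, sum_range_one, returnCount, shift, zero_add,
    Set.indicator_of_mem (s := {y}) h.1]

lemma setOf_succ_lt_returnCount (y : A) (m : ℕ) :
    {ω | ((m + 1 : ℕ) : ℝ≥0∞) < returnCount y ω} =
      ⋃ k, firstHitAt y (k + 1) ∩ shift (k + 1) ⁻¹' {ω | (m : ℝ≥0∞) < returnCount y ω} := by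
  ext ω
  simp only [Set.mem_ofPred_eq, Set.mem_iUnion, Set.mem_inter_iff, Set.mem_preimage]
  refine ⟨fun h => ?_, fun ⟨k, hk, h⟩ => ?_⟩
  · have hhit : ω ∈ hitSet y := by
      by_contra hnot
      rw [(returnCount_eq_zero_iff y ω).2 hnot] at h
      exact not_lt_zero h
    obtain ⟨k, hk⟩ := Set.mem_iUnion.1 ((hitSet_eq_iUnion_firstHitAt y).subset hhit)
    rw [returnCount_eq_one_add hk, Nat.cast_succ, add_comm,
      ENNReal.add_lt_add_iff_left ENNReal.one_ne_top] at h
    exact ⟨k, hk, h⟩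
  · rwa [returnCount_eq_one_add hk, Nat.cast_succ, add_comm,
      ENNReal.add_lt_add_iff_left ENNReal.one_ne_top]

lemma visitCount_eq_encard (y : A) (ω : ℕ → A) :
    visitCount y ω = ((ω ⁻¹' {y}).encard : ℝ≥0∞) := by
  rw [← ENNReal.tsum_set_one, _root_.tsum_subtype (ω ⁻¹' {y}) fun _ => (1 : ℝ≥0∞), visitCount]
  rfl

lemma returnCount_eq_tsum_indicator (y : A) (ω : ℕ → A) :
    returnCount y ω = ∑' m : ℕ, {ω | (m : ℝ≥0∞) < returnCount y ω}.indicator 1 ω := by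
  simp only [Set.indicator_apply, Set.mem_ofPred_eq, Pi.one_apply, returnCount,
    visitCount_eq_encard]
  exact ENat.toENNReal_eq_tsum_ite _

end Visits

section Measurability

variable [MeasurableSpace A]

lemma measurable_shift (k : ℕ) : Measurable (shift (A := A) k) := by
  unfold shift; fun_prop

variable [MeasurableSingletonClass A]

lemma measurableSet_coord_eq (n : ℕ) (y : A) : MeasurableSet {ω : ℕ → A | ω n = y} :=
  (measurableSet_singleton y).preimage (measurable_pi_apply n)

lemma measurableSet_cyl (n : ℕ) (a : ℕ → A) : MeasurableSet (cyl n a) := by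
  unfold cyl; measurability

lemma measurable_visitCount (y : A) : Measurable (visitCount y) :=
  Measurable.tsum fun n =>
    (measurable_const.indicator (measurableSet_singleton y)).comp (measurable_pi_apply n)

lemma generateFrom_cyl [Countable A] :
    MeasurableSpace.generateFrom {S : Set (ℕ → A) | ∃ n a, S = cyl n a} = MeasurableSpace.pi := by
  refine le_antisymm (MeasurableSpace.generateFrom_le ?_) ?_
  · rintro _ ⟨n, a, rfl⟩
    exact measurableSet_cyl n a
  · refine iSup_le fun n => MeasurableSpace.comap_le_iff_le_map.2 fun s _ => ?_
    have hdet : DeterminedUpTo n ((fun ω : ℕ → A => ω n) ⁻¹' s) := fun ω ω' h hω => by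
      simpa [← h n le_rfl] using hω
    rw [MeasurableSpace.map_def, hdet.eq_iUnion_cyl]
    exact MeasurableSet.iUnion fun b =>
      MeasurableSpace.measurableSet_generateFrom ⟨n, _, rfl⟩

lemma measurableSet_firstHitAt (y : A) (n : ℕ) : MeasurableSet (firstHitAt y n) := by
  unfold firstHitAt; measurability

lemma measure_hitSet (ν : Measure (ℕ → A)) (y : A) :
    ν (hitSet y) = ∑' k, ν (firstHitAt y (k + 1)) := by
  rw [hitSet_eq_iUnion_firstHitAt,
    measure_iUnion (pairwise_disjoint_firstHitAt y) fun k => measurableSet_firstHitAt y _]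

lemma measurableSet_hitSet (y : A) : MeasurableSet (hitSet y) := by
  unfold hitSet; measurability

lemma measurable_returnCount (y : A) : Measurable (returnCount y) :=
  (measurable_visitCount y).comp (measurable_shift 1)

lemma measurableSet_lt_returnCount (y : A) (m : ℕ) :
    MeasurableSet {ω | (m : ℝ≥0∞) < returnCount y ω} :=
  measurableSet_lt measurable_const (measurable_returnCount y)

lemma lintegral_visitCount_eq_tsum (ν : Measure (ℕ → A)) (y : A) :
    ∫⁻ ω, visitCount y ω ∂ν = ∑' n, ν {ω | ω n = y} := by
  calc ∫⁻ ω, visitCount y ω ∂ν = ∫⁻ ω, ∑' n, {ω : ℕ → A | ω n = y}.indicator 1 ω ∂ν := rfl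
    _ = ∑' n, ν {ω | ω n = y} := by
      rw [lintegral_tsum fun n =>
        (measurable_one.indicator (measurableSet_coord_eq n y)).aemeasurable]
      simp_rw [lintegral_indicator_one (measurableSet_coord_eq _ y)]

lemma lintegral_visitCount_eq_top {ν : Measure (ℕ → A)} {y : A}
    (h : ν {ω | visitCount y ω = ⊤} = 1) : ∫⁻ ω, visitCount y ω ∂ν = ⊤ :=
  lintegral_eq_top_of_measure_eq_top_ne_zero (measurable_visitCount y).aemeasurable
    (h ▸ one_ne_zero)

end Measurability

structure IsMarkovFamily [DecidableEq A] [MeasurableSpace A] (p : A → A → ℝ)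
    (μ : A → Measure (ℕ → A)) : Prop where
  nonneg : ∀ x y, 0 ≤ p x y
  isProbabilityMeasure : ∀ x, IsProbabilityMeasure (μ x)
  measure_cyl : ∀ x n a, μ x (cyl n a) =
    ENNReal.ofReal ((if a 0 = x then (1 : ℝ) else 0) * ∏ i ∈ range n, p (a i) (a (i + 1)))

namespace IsMarkovFamily

variable [DecidableEq A] [MeasurableSpace A] {p : A → A → ℝ} {μ : A → Measure (ℕ → A)}
  (hM : IsMarkovFamily p μ)
include hM

lemma measure_cyl_inter_shift_cyl (x : A) (k m : ℕ) (a b : ℕ → A) :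
    μ x (cyl k a ∩ shift k ⁻¹' cyl m b) = μ x (cyl k a) * μ (a k) (cyl m b) := by
  by_cases hb : b 0 = a k
  · have hprod : ∏ i ∈ range (k + m), p (glue k a b i) (glue k a b (i + 1)) =
        (∏ i ∈ range k, p (a i) (a (i + 1))) * ∏ i ∈ range m, p (b i) (b (i + 1)) := by
      rw [prod_range_add]
      congr 1
      · refine prod_congr rfl fun i hi => ?_
        rw [mem_range] at hi
        rw [glue_of_le _ _ _ hi.le, glue_of_le _ _ _ hi]
      · refine prod_congr rfl fun i _ => ?_
        rw [glue_add_left hb, add_assoc, glue_add_left hb]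
    have hweight : 0 ≤ (if a 0 = x then (1 : ℝ) else 0) * ∏ i ∈ range k, p (a i) (a (i + 1)) :=
      mul_nonneg (by split_ifs <;> norm_num) (prod_nonneg fun _ _ => hM.nonneg _ _)
    rw [cyl_inter_shift_cyl hb, hM.measure_cyl, hM.measure_cyl, hM.measure_cyl, hprod,
      glue_of_le _ _ _ (Nat.zero_le k), if_pos hb, one_mul, ← ENNReal.ofReal_mul hweight, mul_assoc]
  · rw [cyl_inter_shift_cyl_of_ne hb, hM.measure_cyl (a k), if_neg hb]
    simp

lemma measure_coord_zero_self (x : A) : μ x {ω | ω 0 = x} = 1 := by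
  have hcyl : {ω : ℕ → A | ω 0 = x} = cyl 0 fun _ => x := by
    ext ω
    simp [cyl]
  rw [hcyl, hM.measure_cyl]
  simp

lemma ofReal_le_measure_coord_one (z y : A) :
    ENNReal.ofReal (p z y) ≤ μ z {ω | ω 1 = y} := by
  calc ENNReal.ofReal (p z y) = μ z (cyl 1 fun i => if i = 0 then z else y) := by
        rw [hM.measure_cyl]
        simp
    _ ≤ μ z {ω | ω 1 = y} := measure_mono fun ω hω => by simpa using hω 1 le_rfl

variable [MeasurableSingletonClass A] [Countable A]

lemma measure_cyl_inter_shift (x : A) (k : ℕ) (a : ℕ → A) {F : Set (ℕ → A)}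
    (hF : MeasurableSet F) :
    μ x (cyl k a ∩ shift k ⁻¹' F) = μ x (cyl k a) * μ (a k) F := by
  have := hM.isProbabilityMeasure x
  have hmap : ((μ x).restrict (cyl k a)).map (shift k) = μ x (cyl k a) • μ (a k) := by
    refine ext_of_generate_finite _ generateFrom_cyl.symm isPiSystem_cyl ?_ ?_
    · rintro _ ⟨m, b, rfl⟩
      rw [Measure.map_apply (measurable_shift k) (measurableSet_cyl m b),
        Measure.restrict_apply (measurable_shift k (measurableSet_cyl m b)), Set.inter_comm,
        hM.measure_cyl_inter_shift_cyl]
      rfl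
    · have := hM.isProbabilityMeasure (a k)
      rw [Measure.map_apply (measurable_shift k) MeasurableSet.univ, Set.preimage_univ,
        Measure.restrict_apply_univ]
      simp
  rw [Set.inter_comm, ← Measure.restrict_apply (measurable_shift k hF),
    ← Measure.map_apply (measurable_shift k) hF, hmap]
  rfl

lemma measure_inter_shift {n : ℕ} {S : Set (ℕ → A)} (hS : DeterminedUpTo n S) {z : A}
    (hz : ∀ ω ∈ S, ω n = z) (x : A) {F : Set (ℕ → A)} (hF : MeasurableSet F) :
    μ x (S ∩ shift n ⁻¹' F) = μ x S * μ z F := by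
  have hdisj : Pairwise fun b b' : {b : Fin (n + 1) → A // extend n b ∈ S} =>
      Disjoint (cyl n (extend n b.1)) (cyl n (extend n b'.1)) :=
    fun b b' hne => disjoint_cyl_extend fun h => hne (Subtype.ext h)
  rw [hS.eq_iUnion_cyl, Set.iUnion_inter,
    measure_iUnion (hdisj.mono fun _ _ h => h.mono Set.inter_subset_left Set.inter_subset_left)
      fun b => (measurableSet_cyl _ _).inter (measurable_shift n hF),
    measure_iUnion hdisj fun b => measurableSet_cyl _ _, ← ENNReal.tsum_mul_right]
  refine tsum_congr fun b => ?_
  rw [hM.measure_cyl_inter_shift x n _ hF, hz _ b.2]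

lemma measure_coord_mul_le (x z y : A) (m n : ℕ) :
    μ x {ω | ω m = z} * μ z {ω | ω n = y} ≤ μ x {ω | ω (n + m) = y} := by
  have hdet : DeterminedUpTo m {ω : ℕ → A | ω m = z} :=
    fun _ _ h (hω : _ = z) => (h m le_rfl).symm.trans hω
  rw [← hM.measure_inter_shift hdet (fun _ h => h) x (measurableSet_coord_eq n y)]
  exact measure_mono fun ω hω => hω.2

lemma measure_coord_pos_of_matPow_pos {x y : A} {n : ℕ} (h : 0 < matPow p n x y) :
    0 < μ x {ω | ω n = y} := by
  induction n generalizing y with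
  | zero =>
    obtain rfl : x = y := by
      by_contra hxy
      simp [matPow, hxy] at h
    rw [hM.measure_coord_zero_self]
    exact one_pos
  | succ n ih =>
    obtain ⟨z, hz⟩ : ∃ z, 0 < matPow p n x z * p z y := by
      by_contra! hle
      exact h.not_ge (tsum_nonpos hle)
    obtain ⟨hxz, hzy⟩ := (pos_and_pos_or_neg_and_neg_of_mul_pos hz).resolve_right
      fun hneg => (hM.nonneg z y).not_gt hneg.2
    calc 0 < μ x {ω | ω n = z} * μ z {ω | ω 1 = y} :=
          ENNReal.mul_pos (ih hxz).ne' ((ENNReal.ofReal_pos.2 hzy).trans_le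
            (hM.ofReal_le_measure_coord_one z y)).ne'
      _ ≤ μ x {ω | ω (n + 1) = y} := by
          simpa [add_comm] using hM.measure_coord_mul_le x z y n 1

lemma measure_firstHitAt_inter_shift (x y : A) (k : ℕ) {F : Set (ℕ → A)}
    (hF : MeasurableSet F) :
    μ x (firstHitAt y (k + 1) ∩ shift (k + 1) ⁻¹' F) = μ x (firstHitAt y (k + 1)) * μ y F :=
  hM.measure_inter_shift (determinedUpTo_firstHitAt y (k + 1)) (fun _ h => h.1) x hF

lemma measure_lt_returnCount (x y : A) (m : ℕ) :
    μ x {ω | (m : ℝ≥0∞) < returnCount y ω} = μ x (hitSet y) * μ y (hitSet y) ^ m := by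
  induction m generalizing x with
  | zero =>
    simp_rw [Nat.cast_zero, pos_iff_ne_zero, ne_eq, returnCount_eq_zero_iff, not_not, pow_zero,
      mul_one, Set.ofPred_mem_eq]
  | succ m ih =>
    have hmeas := measurableSet_lt_returnCount y m
    rw [setOf_succ_lt_returnCount, measure_iUnion
      ((pairwise_disjoint_firstHitAt y).mono fun _ _ h => h.mono Set.inter_subset_left
        Set.inter_subset_left)
      fun k => (measurableSet_firstHitAt y _).inter (measurable_shift _ hmeas),
      tsum_congr fun k => hM.measure_firstHitAt_inter_shift x y k hmeas, ENNReal.tsum_mul_right,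
      ← measure_hitSet, ih, pow_succ']

lemma lintegral_returnCount (x y : A) :
    ∫⁻ ω, returnCount y ω ∂μ x = μ x (hitSet y) * (1 - μ y (hitSet y))⁻¹ := by
  have hmeas := measurableSet_lt_returnCount y
  calc ∫⁻ ω, returnCount y ω ∂μ x
      = ∫⁻ ω, ∑' m : ℕ, {ω | (m : ℝ≥0∞) < returnCount y ω}.indicator 1 ω ∂μ x :=
        lintegral_congr fun ω => returnCount_eq_tsum_indicator y ω
    _ = ∑' m : ℕ, μ x {ω | (m : ℝ≥0∞) < returnCount y ω} := by
        rw [lintegral_tsum fun m => (measurable_one.indicator (hmeas m)).aemeasurable]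
        simp_rw [lintegral_indicator_one (hmeas _)]
    _ = μ x (hitSet y) * (1 - μ y (hitSet y))⁻¹ := by
        simp_rw [hM.measure_lt_returnCount, ENNReal.tsum_mul_left, ENNReal.tsum_geometric]

lemma lintegral_visitCount (x y : A) :
    ∫⁻ ω, visitCount y ω ∂μ x =
      μ x {ω | ω 0 = y} + μ x (hitSet y) * (1 - μ y (hitSet y))⁻¹ := by
  have hsplit : ∀ ω, visitCount y ω = {ω : ℕ → A | ω 0 = y}.indicator 1 ω + returnCount y ω :=
    fun ω => by
      rw [visitCount_eq_sum_add_shift y ω 1, sum_range_one, returnCount]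
      rfl
  rw [lintegral_congr hsplit, lintegral_add_left (measurable_one.indicator
    (measurableSet_coord_eq 0 y)), lintegral_indicator_one (measurableSet_coord_eq 0 y),
    hM.lintegral_returnCount]

lemma measure_hitSet_self_eq_one_of_lintegral_eq_top {x y : A}
    (h : ∫⁻ ω, visitCount y ω ∂μ x = ⊤) : μ y (hitSet y) = 1 := by
  have := hM.isProbabilityMeasure x
  have := hM.isProbabilityMeasure y
  by_contra hne
  have hlt : μ y (hitSet y) < 1 := prob_le_one.lt_of_ne hne
  rw [hM.lintegral_visitCount] at h
  refine ENNReal.add_ne_top.2 ⟨measure_ne_top _ _, ENNReal.mul_ne_top (measure_ne_top _ _) ?_⟩ h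
  rwa [ne_eq, ENNReal.inv_eq_top, tsub_eq_zero_iff_le, not_le]

lemma measure_visitCount_eq_top {x y : A} (hyy : μ y (hitSet y) = 1)
    (hxy : μ x (hitSet y) = 1) : μ x {ω | visitCount y ω = ⊤} = 1 := by
  have := hM.isProbabilityMeasure x
  have hmeas := measurableSet_lt_returnCount y
  have hset : {ω | visitCount y ω = ⊤} = ⋂ m : ℕ, {ω | (m : ℝ≥0∞) < returnCount y ω} := by
    ext ω
    simp only [Set.mem_ofPred_eq, Set.mem_iInter, returnCount]
    rw [← visitCount_shift_eq_top_iff y ω 1]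
    refine ⟨fun h m => h ▸ ENNReal.natCast_lt_top m, fun h => by_contra fun hne => ?_⟩
    obtain ⟨n, hn⟩ := ENNReal.exists_nat_gt hne
    exact (h n).not_gt hn
  rw [hset, ← prob_compl_eq_zero_iff (MeasurableSet.iInter hmeas), Set.compl_iInter]
  refine measure_iUnion_null fun m => (prob_compl_eq_zero_iff (hmeas m)).2 ?_
  rw [hM.measure_lt_returnCount, hxy, hyy, one_pow, one_mul]

lemma measure_hitSet_eq_one_of_recurrent {a c : A} (hrec : μ a {ω | visitCount a ω = ⊤} = 1)
    (hreach : μ a (hitSet c) ≠ 0) : μ c (hitSet a) = 1 := by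
  have := hM.isProbabilityMeasure a
  have := hM.isProbabilityMeasure c
  obtain ⟨k, hk⟩ : ∃ k, μ a (firstHitAt c (k + 1)) ≠ 0 := by
    by_contra! h
    exact hreach (by rw [measure_hitSet, ENNReal.tsum_eq_zero.2 h])
  have hsub : firstHitAt c (k + 1) ∩ shift (k + 1) ⁻¹' (hitSet a)ᶜ ⊆
      {ω | visitCount a ω = ⊤}ᶜ := by
    rintro ω ⟨-, hnot⟩ htop
    rw [Set.mem_ofPred_eq, ← visitCount_shift_eq_top_iff a ω (1 + (k + 1)), ← shift_shift,
      ← returnCount, (returnCount_eq_zero_iff a _).2 hnot] at htop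
    exact ENNReal.zero_ne_top htop
  have hnull := measure_mono_null hsub ((prob_compl_eq_zero_iff
    (measurable_visitCount a (measurableSet_singleton ⊤))).2 hrec)
  rwa [hM.measure_firstHitAt_inter_shift a c k (measurableSet_hitSet a).compl, mul_eq_zero,
    or_iff_right hk, prob_compl_eq_zero_iff (measurableSet_hitSet a)] at hnull

lemma measure_hitSet_ne_zero_of_matPow_pos {a c : A} {n : ℕ} (hn : 0 < matPow p n a c)
    (hac : a ≠ c) : μ a (hitSet c) ≠ 0 := by
  have hn0 : n ≠ 0 := by
    rintro rfl
    simp [matPow, hac] at hn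
  exact ((hM.measure_coord_pos_of_matPow_pos hn).trans_le
    (measure_mono fun _ hω => (⟨n, Nat.one_le_iff_ne_zero.2 hn0, hω⟩ : _ ∈ hitSet c))).ne'

lemma measure_hitSet_self_eq_one_of_irreducible (hirr : ∀ x y : A, ∃ n, 0 < matPow p n x y)
    {y : A} (hy : μ y (hitSet y) = 1) (b : A) : μ b (hitSet b) = 1 := by
  obtain ⟨i, hi⟩ := hirr b y
  obtain ⟨j, hj⟩ := hirr y b
  have hGy : ∑' n, μ y {ω | ω n = y} = ⊤ := by
    rw [← lintegral_visitCount_eq_tsum]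
    exact lintegral_visitCount_eq_top (hM.measure_visitCount_eq_top hy hy)
  have hGb : ∑' n, μ b {ω | ω n = b} = ⊤ := by
    refine top_le_iff.1 ?_
    calc ⊤ = μ b {ω | ω i = y} * (∑' n, μ y {ω | ω n = y}) * μ y {ω | ω j = b} := by
          rw [hGy, ENNReal.mul_top (hM.measure_coord_pos_of_matPow_pos hi).ne',
            ENNReal.top_mul (hM.measure_coord_pos_of_matPow_pos hj).ne']
      _ = ∑' n, μ b {ω | ω i = y} * μ y {ω | ω n = y} * μ y {ω | ω j = b} := by
          rw [← ENNReal.tsum_mul_left, ← ENNReal.tsum_mul_right]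
      _ ≤ ∑' n, μ b {ω | ω (j + (n + i)) = b} := ENNReal.tsum_le_tsum fun n =>
          calc _ ≤ μ b {ω | ω (n + i) = y} * μ y {ω | ω j = b} := by
                gcongr
                exact hM.measure_coord_mul_le b y y i n
            _ ≤ _ := hM.measure_coord_mul_le b y b (n + i) j
      _ ≤ ∑' n, μ b {ω | ω n = b} :=
          ENNReal.tsum_comp_le_tsum_of_injective (fun n n' h => by simpa using h) _
  exact hM.measure_hitSet_self_eq_one_of_lintegral_eq_top (x := b)
    (by rwa [lintegral_visitCount_eq_tsum])

lemma measure_hitSet_eq_one_of_irreducible (hirr : ∀ x y : A, ∃ n, 0 < matPow p n x y)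
    {a : A} (ha : μ a (hitSet a) = 1) (c : A) : μ c (hitSet a) = 1 := by
  rcases eq_or_ne c a with rfl | hca
  · exact ha
  obtain ⟨n, hn⟩ := hirr a c
  exact hM.measure_hitSet_eq_one_of_recurrent (hM.measure_visitCount_eq_top ha ha)
    (hM.measure_hitSet_ne_zero_of_matPow_pos hn hca.symm)

end IsMarkovFamily

end MarkovChain

theorem stmt_1_general {A : Type*} [Countable A] [Nonempty A] [DecidableEq A]
    [MeasurableSpace A] [MeasurableSingletonClass A]
    (p : A → A → ℝ)
    (hnn : ∀ x y, 0 ≤ p x y)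
    (μ : A → Measure (ℕ → A)) (hprob : ∀ x, IsProbabilityMeasure (μ x))
    (hμ : ∀ (x : A) (n : ℕ) (a : ℕ → A),
      μ x {ω | ∀ i ≤ n, ω i = a i} =
        ENNReal.ofReal ((if a 0 = x then (1 : ℝ) else 0) *
          ∏ i ∈ Finset.range n, p (a i) (a (i + 1))))
    (hirr : ∀ x y : A, ∃ n : ℕ, 0 < matPow p n x y) :
    List.TFAE
      [∀ x y : A, μ y {ω | ∃ k : ℕ, 1 ≤ k ∧ ω k = x} = 1,
       ∀ x y : A, (∫⁻ ω, visitCount y ω ∂μ x) = ⊤,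
       ∃ x y : A, (∫⁻ ω, visitCount y ω ∂μ x) = ⊤,
       ∀ x y : A, μ x {ω | visitCount y ω = ⊤} = 1,
       ∃ x y : A, μ x {ω | visitCount y ω = ⊤} = 1] := by
  have hM : MarkovChain.IsMarkovFamily p μ := ⟨hnn, hprob, hμ⟩
  tfae_have 1 → 4 := fun h x y => hM.measure_visitCount_eq_top (h y y) (h y x)
  tfae_have 4 → 2 := fun h x y => MarkovChain.lintegral_visitCount_eq_top (h x y)
  tfae_have 2 → 3 := fun h => ⟨Classical.arbitrary A, Classical.arbitrary A, h _ _⟩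
  tfae_have 4 → 5 := fun h => ⟨Classical.arbitrary A, Classical.arbitrary A, h _ _⟩
  tfae_have 5 → 3 := by
    rintro ⟨x, y, h⟩
    exact ⟨x, y, MarkovChain.lintegral_visitCount_eq_top h⟩
  tfae_have 3 → 1 := by
    rintro ⟨_, _, h⟩ a
    exact hM.measure_hitSet_eq_one_of_irreducible hirr
      (hM.measure_hitSet_self_eq_one_of_irreducible hirr
        (hM.measure_hitSet_self_eq_one_of_lintegral_eq_top h) a)
  tfae_finish

/-- For an irreducible Markov chain with stochastic transition matrix `p` on a
countable state space `A`, with laws `μ_x` given by the cylinder formula, the following are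
equivalent: (1) recurrence: `μ_y(τ_x < ∞) = 1` for all `x,y`; (2) `E^x[V_y] = ∞` for all
`x,y`; (3) `E^x[V_y] = ∞` for some `x,y`; (4) `μ_x(V_y = ∞) = 1` for all `x,y`;
(5) `μ_x(V_y = ∞) = 1` for some `x,y`. -/
theorem stmt_1 {A : Type*} [Countable A] [Nonempty A] [DecidableEq A]
    [MeasurableSpace A] [MeasurableSingletonClass A]
    (p : A → A → ℝ)
    (hnn : ∀ x y, 0 ≤ p x y) (hrow : ∀ x, HasSum (p x) 1)
    (μ : A → Measure (ℕ → A)) (hprob : ∀ x, IsProbabilityMeasure (μ x))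
    (hμ : ∀ (x : A) (n : ℕ) (a : ℕ → A),
      μ x {ω | ∀ i ≤ n, ω i = a i} =
        ENNReal.ofReal ((if a 0 = x then (1 : ℝ) else 0) *
          ∏ i ∈ Finset.range n, p (a i) (a (i + 1))))
    (hirr : ∀ x y : A, ∃ n : ℕ, 0 < matPow p n x y) :
    List.TFAE
      [∀ x y : A, μ y {ω | ∃ k : ℕ, 1 ≤ k ∧ ω k = x} = 1,
       ∀ x y : A, (∫⁻ ω, visitCount y ω ∂μ x) = ⊤,
       ∃ x y : A, (∫⁻ ω, visitCount y ω ∂μ x) = ⊤,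
       ∀ x y : A, μ x {ω | visitCount y ω = ⊤} = 1,
       ∃ x y : A, μ x {ω | visitCount y ω = ⊤} = 1] :=
  stmt_1_general p hnn μ hprob hμ hirr
end

section
/- Let 0 < q < 1. The series ∑_{n=0}^∞ C(2n,n) q^n (1−q)^n diverges (i.e. fails to be summable) if and only if q = 1/2. Consequently, the nearest-neighbour random walk on ℤ with p(x,x+1) = q, p(x,x−1) = 1−q has E^0[V_0] = ∑_n p_{2n} = ∞ exactly when q = 1/2: it is recurrent for q = 1/2 and transient for q ≠ 1/2. -/
/-!
The return-probability series is `∑ C(2n,n) xⁿ` with `x = q(1-q) = 1/4 - (q - 1/2)²`. Since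
`4ⁿ/(2n) ≤ C(2n,n) ≤ 4ⁿ`, this power series has radius of convergence `1/4`: for `|x| < 1/4`
it is dominated by a geometric series, and at `x = 1/4` its terms are at least `1/(2n)`, so it
is compared with the harmonic series. Hence it diverges exactly when `q = 1/2`.
-/

open Nat

lemma ENNReal.tsum_ofReal_eq_top_iff_not_summable {α : Type*} {f : α → ℝ}
    (hf : ∀ i, 0 ≤ f i) : ∑' i, ENNReal.ofReal (f i) = ⊤ ↔ ¬ Summable f := by
  refine ⟨fun htop hs => hs.tsum_ofReal_ne_top htop, fun hns => ?_⟩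
  by_contra hne
  refine hns ?_
  simpa only [ENNReal.toReal_ofReal (hf _)] using ENNReal.summable_toReal hne

-- At `n = 0` the left side is the junk value `0⁻¹ = 0`, so no case split is needed.
lemma inv_two_mul_le_centralBinom_div_four_pow (n : ℕ) :
    ((2 * n : ℝ))⁻¹ ≤ centralBinom n / 4 ^ n := by
  rcases Nat.eq_zero_or_pos n with rfl | hn
  · simp
  have h4 : (4 : ℝ) ^ n ≤ 2 * n * centralBinom n := by
    exact_mod_cast four_pow_le_two_mul_self_mul_centralBinom n hn
  rw [inv_eq_one_div, div_le_div_iff₀ (by positivity) (by positivity)]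
  linarith

lemma summable_centralBinom_mul_pow_of_lt {x : ℝ} (hx : |x| < 1 / 4) :
    Summable fun n => (centralBinom n : ℝ) * x ^ n := by
  refine Summable.of_norm_bounded (g := fun n => (4 * |x|) ^ n)
    (summable_geometric_of_lt_one (by positivity) (by linarith)) fun n => ?_
  rw [norm_mul, norm_pow, Real.norm_natCast, Real.norm_eq_abs, mul_pow]
  gcongr
  exact_mod_cast centralBinom_le_four_pow n

lemma not_summable_centralBinom_mul_pow_of_le {x : ℝ} (hx : 1 / 4 ≤ |x|) :
    ¬ Summable fun n => (centralBinom n : ℝ) * x ^ n := by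
  intro hs
  have hharmonic : Summable fun n : ℕ => ((2 * n : ℝ))⁻¹ := by
    refine hs.abs.of_nonneg_of_le (fun n => by positivity) fun n => ?_
    calc ((2 * n : ℝ))⁻¹ ≤ centralBinom n / 4 ^ n :=
          inv_two_mul_le_centralBinom_div_four_pow n
      _ = centralBinom n * (1 / 4) ^ n := by rw [one_div_pow, div_eq_mul_one_div]
      _ ≤ |(centralBinom n : ℝ) * x ^ n| := by
          rw [abs_mul, abs_pow, Nat.abs_cast]
          gcongr
  rw [funext fun n : ℕ => mul_inv (2 : ℝ) n, summable_mul_left_iff (by norm_num)] at hharmonic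
  exact Real.not_summable_natCast_inv hharmonic

theorem summable_centralBinom_mul_pow_iff {x : ℝ} :
    Summable (fun n => (centralBinom n : ℝ) * x ^ n) ↔ |x| < 1 / 4 :=
  ⟨fun hs => not_le.mp fun hx => not_summable_centralBinom_mul_pow_of_le hx hs,
    summable_centralBinom_mul_pow_of_lt⟩

lemma abs_mul_one_sub_lt_quarter_iff {q : ℝ} (h0 : 0 ≤ q) (h1 : q ≤ 1) :
    |q * (1 - q)| < 1 / 4 ↔ q ≠ 1 / 2 := by
  rw [abs_of_nonneg (mul_nonneg h0 (sub_nonneg.mpr h1)), ← sub_ne_zero, ← sq_pos_iff]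
  constructor <;> intro h <;> nlinarith

/-- For `0 < q < 1`, the series `∑ C(2n,n) qⁿ(1−q)ⁿ` (the return-probability
series `∑ p_{2n}` of the nearest-neighbour walk on `ℤ`) fails to be summable iff `q = 1/2`;
equivalently, the expected number of visits to the origin `E⁰[V₀] = ∑ p_{2n}` is infinite
exactly when `q = 1/2` (recurrent for `q = 1/2`, transient otherwise). -/
theorem stmt_3 (q : ℝ) (h0 : 0 < q) (h1 : q < 1) :
    (¬ Summable (fun n : ℕ => (Nat.centralBinom n : ℝ) * q ^ n * (1 - q) ^ n) ↔ q = 1 / 2)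
    ∧ ((∑' n : ℕ, ENNReal.ofReal ((Nat.centralBinom n : ℝ) * q ^ n * (1 - q) ^ n)) = ⊤
        ↔ q = 1 / 2) := by
  have hdiverges :
      ¬ Summable (fun n : ℕ => (Nat.centralBinom n : ℝ) * q ^ n * (1 - q) ^ n) ↔ q = 1 / 2 := by
    simp_rw [mul_assoc, ← mul_pow]
    rw [summable_centralBinom_mul_pow_iff, abs_mul_one_sub_lt_quarter_iff h0.le h1.le,
      not_not]
  have hnonneg (n : ℕ) : 0 ≤ (Nat.centralBinom n : ℝ) * q ^ n * (1 - q) ^ n := by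
    have : 0 < 1 - q := sub_pos.mpr h1
    positivity
  exact ⟨hdiverges, (ENNReal.tsum_ofReal_eq_top_iff_not_summable hnonneg).trans hdiverges⟩
end

section
/- Let A be a finite set, P a real matrix indexed by A, and suppose that for every subset B ⊆ A the matrix I − P_B is invertible, where P_B is the submatrix of P with rows and columns indexed by B; write G_B = (I − P_B)⁻¹. For distinct points x₁,…,x_k ∈ A set A_j = A \ {x₁,…,x_{j−1}} and F(A; x₁,…,x_k) = ∏_{j=1}^k G_{A_j}(x_j,x_j). Then for every permutation σ of {1,…,k}, F(A; x_{σ(1)},…,x_{σ(k)}) = F(A; x₁,…,x_k); i.e. F depends only on the set V = {x₁,…,x_k} and not on the ordering of its elements. -/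
/-!
By Cramer's rule `G_B(a,a) = det(I - P_{B \ a}) / det(I - P_B)`, so the product defining
`F(A; x₁,…,x_k)` telescopes to `det(I - P_{A \ V}) / det(I - P_A)` with `V = {x₁,…,x_k}`,
which does not see the order of the points.
-/

open Matrix

/-- The principal submatrix of `P` with rows and columns indexed by the subset `B`. -/
def Matrix.restrictFinset {A : Type*} (P : Matrix A A ℝ) (B : Finset A) :
    Matrix {a // a ∈ B} {a // a ∈ B} ℝ :=
  P.submatrix (fun i => (i : A)) fun j => (j : A)

/-- The diagonal entry `G_B(a,a)` of the Green's function `G_B = (I − P_B)⁻¹`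
(by convention `0` if `a ∉ B`). -/
noncomputable def greenDiag {A : Type*} [Fintype A] [DecidableEq A]
    (P : Matrix A A ℝ) (B : Finset A) (a : A) : ℝ :=
  if h : a ∈ B then (1 - P.restrictFinset B)⁻¹ ⟨a, h⟩ ⟨a, h⟩ else 0

/-- For an ordering `x : Fin k → A` of distinct points, `A_j = A \ {x_1,…,x_{j−1}}`. -/
def avoid {A : Type*} [Fintype A] [DecidableEq A] {k : ℕ} (x : Fin k → A) (j : Fin k) :
    Finset A :=
  Finset.univ \ Finset.image x (Finset.univ.filter fun i => i < j)

/-- `F(A; x_1,…,x_k) = ∏_{j=1}^k G_{A_j}(x_j,x_j)`. -/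
noncomputable def Ffun {A : Type*} [Fintype A] [DecidableEq A] {k : ℕ}
    (P : Matrix A A ℝ) (x : Fin k → A) : ℝ :=
  ∏ j : Fin k, greenDiag P (avoid x j) (x j)

theorem Matrix.adjugate_apply_self {n R : Type*} [Fintype n] [DecidableEq n] [CommRing R]
    (A : Matrix n n R) (i : n) :
    A.adjugate i i = (A.submatrix (Subtype.val : {j // j ≠ i} → n) Subtype.val).det := by
  -- Row `i` of `A.updateRow i (Pi.single i 1)` is the unit vector `eᵢ`, so the matrix is
  -- block triangular with the `1 × 1` block `1` at `(i, i)`.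
  rw [adjugate_apply, twoBlockTriangular_det _ (· ≠ i)]
  · have : Subsingleton {j // ¬j ≠ i} :=
      ⟨fun a b => Subtype.ext <| (not_not.mp a.2).trans (not_not.mp b.2).symm⟩
    have hblock : ((A.updateRow i (Pi.single i 1)).toSquareBlockProp (¬ · ≠ i)).det = 1 := by
      convert det_eq_elem_of_subsingleton _ (⟨i, not_not_intro rfl⟩ : {j // ¬j ≠ i})
      simp [toSquareBlockProp, toBlock]
    rw [hblock, mul_one]
    congr 1
    ext r c
    simp [toSquareBlockProp, toBlock, updateRow_ne r.2]
  · rintro r hr c hc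
    simp [not_not.mp hr, hc]

-- Also true for singular `A`, where both sides are `0`.
theorem Matrix.inv_apply_self {n K : Type*} [Fintype n] [DecidableEq n] [Field K]
    (A : Matrix n n K) (i : n) :
    A⁻¹ i i = (A.submatrix (Subtype.val : {j // j ≠ i} → n) Subtype.val).det / A.det := by
  rw [inv_def, smul_apply, adjugate_apply_self, Ring.inverse_eq_inv', smul_eq_mul,
    div_eq_inv_mul]

theorem Matrix.one_sub_restrictFinset {A : Type*} [DecidableEq A] (P : Matrix A A ℝ)
    (B : Finset A) : 1 - P.restrictFinset B = (1 - P).restrictFinset B := by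
  ext b c
  simp [restrictFinset, one_apply]

theorem Matrix.det_submatrix_ne_restrictFinset {A : Type*} [DecidableEq A]
    (M : Matrix A A ℝ) {B : Finset A} {a : A} (h : a ∈ B) :
    ((M.restrictFinset B).submatrix (Subtype.val : {j // j ≠ (⟨a, h⟩ : B)} → B)
      Subtype.val).det = (M.restrictFinset (B.erase a)).det := by
  let e : B.erase a ≃ {j // j ≠ (⟨a, h⟩ : B)} :=
    { toFun := fun b => ⟨⟨b, Finset.mem_of_mem_erase b.2⟩,
        fun hb => Finset.ne_of_mem_erase b.2 (congrArg Subtype.val hb)⟩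
      invFun := fun j => ⟨j.1, Finset.mem_erase.mpr ⟨fun hj => j.2 (Subtype.ext hj), j.1.2⟩⟩ }
  rw [← det_submatrix_equiv_self e]
  rfl

theorem greenDiag_eq_det_div {A : Type*} [Fintype A] [DecidableEq A] (P : Matrix A A ℝ)
    {B : Finset A} {a : A} (h : a ∈ B) :
    greenDiag P B a
      = (1 - P.restrictFinset (B.erase a)).det / (1 - P.restrictFinset B).det := by
  rw [greenDiag, dif_pos h, inv_apply_self]
  simp_rw [one_sub_restrictFinset]
  rw [det_submatrix_ne_restrictFinset]

theorem Finset.prod_range_div_of_ne_zero {G : Type*} [CommGroupWithZero G] (f : ℕ → G)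
    (hf : ∀ i, f i ≠ 0) (n : ℕ) : ∏ i ∈ range n, f (i + 1) / f i = f n / f 0 := by
  induction n with
  | zero => simp [hf 0]
  | succ n ih =>
    rw [prod_range_succ, ih]
    field_simp [hf n]

section avoidPrefix

variable {A : Type*} [Fintype A] [DecidableEq A] {k : ℕ} (x : Fin k → A)

/-- `avoid x` indexed by `ℕ`, so that it also provides the final set `A \ {x_1, …, x_k}`. -/
def avoidPrefix (n : ℕ) : Finset A :=
  Finset.univ \ Finset.image x (Finset.univ.filter fun i => (i : ℕ) < n)

theorem avoid_eq_avoidPrefix (j : Fin k) : avoid x j = avoidPrefix x j := rfl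

theorem avoidPrefix_zero : avoidPrefix x 0 = Finset.univ := by
  simp [avoidPrefix]

theorem avoidPrefix_length : avoidPrefix x k = Finset.univ \ Finset.univ.image x := by
  simp [avoidPrefix]

variable {x}

theorem mem_avoidPrefix_self (hx : Function.Injective x) (j : Fin k) :
    x j ∈ avoidPrefix x j := by
  simp only [avoidPrefix, Finset.mem_sdiff, Finset.mem_univ, true_and, Finset.mem_image,
    Finset.mem_filter, not_exists, not_and]
  intro i hi hij
  exact hi.ne (congrArg Fin.val (hx hij))

theorem avoidPrefix_erase_self (j : Fin k) :
    (avoidPrefix x j).erase (x j) = avoidPrefix x (j + 1) := by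
  ext b
  simp only [avoidPrefix, Finset.mem_erase, Finset.mem_sdiff, Finset.mem_univ, true_and,
    Finset.mem_image, Finset.mem_filter, Nat.lt_succ_iff_lt_or_eq]
  grind

end avoidPrefix

theorem Ffun_eq_det_div {A : Type*} [Fintype A] [DecidableEq A] (P : Matrix A A ℝ)
    (hinv : ∀ B : Finset A, IsUnit (1 - P.restrictFinset B))
    {k : ℕ} {x : Fin k → A} (hx : Function.Injective x) :
    Ffun P x = (1 - P.restrictFinset (Finset.univ \ Finset.univ.image x)).det
      / (1 - P.restrictFinset Finset.univ).det := by
  set d : ℕ → ℝ := fun n => (1 - P.restrictFinset (avoidPrefix x n)).det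
  have hd : ∀ n, d n ≠ 0 := fun n => ((isUnit_iff_isUnit_det _).mp (hinv _)).ne_zero
  calc Ffun P x = ∏ j : Fin k, d (j + 1) / d j := by
        refine Finset.prod_congr rfl fun j _ => ?_
        rw [avoid_eq_avoidPrefix, greenDiag_eq_det_div P (mem_avoidPrefix_self hx j),
          avoidPrefix_erase_self]
    _ = d k / d 0 := by
        rw [Fin.prod_univ_eq_prod_range (fun n => d (n + 1) / d n),
          Finset.prod_range_div_of_ne_zero d hd]
    _ = _ := by
        simp only [d]
        rw [avoidPrefix_length, avoidPrefix_zero]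

/-- If `I − P_B` is invertible for every `B ⊆ A`, then for distinct points
`x₁,…,x_k ∈ A` and any permutation `σ` of `{1,…,k}`,
`F(A; x_{σ(1)},…,x_{σ(k)}) = F(A; x₁,…,x_k)`: the quantity `F` depends only on the set
`{x₁,…,x_k}`, not on the ordering. -/
theorem stmt_8 {A : Type*} [Fintype A] [DecidableEq A] (P : Matrix A A ℝ)
    (hinv : ∀ B : Finset A, IsUnit (1 - P.restrictFinset B))
    {k : ℕ} (x : Fin k → A) (hx : Function.Injective x) (σ : Equiv.Perm (Fin k)) :
    Ffun P (x ∘ σ) = Ffun P x := by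
  rw [Ffun_eq_det_div P hinv (hx.comp σ.injective), Ffun_eq_det_div P hinv hx,
    ← Finset.image_image, Finset.image_univ_equiv]
end

section
/- Let A be a finite set partitioned as A = V ⊔ W, and let P be a real A×A matrix such that I − P_A and I − P_W are invertible (P_B denoting the principal submatrix indexed by B). Define the 'watched' matrix P̃ on V by P̃ = P_{VV} + P_{VW}(I − P_{WW})⁻¹ P_{WV}, where P_{VW} etc. are the corresponding blocks of P. Then I − P̃ is invertible and the V×V submatrix of (I − P_A)⁻¹ equals (I − P̃)⁻¹. (Probabilistically: the Green's function of the Markov chain viewed only when visiting V equals the restriction of the Green's function G_A to rows and columns indexed by V.) -/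
open Matrix

/-- Let `A = V ⊔ W` be finite, `P` a real `A×A` matrix with `I − P` and
`I − P_WW` invertible. With `P̃ = P_VV + P_VW (I − P_WW)⁻¹ P_WV` (the chain watched on `V`),
`I − P̃` is invertible and the `V×V` submatrix of `(I − P)⁻¹` equals `(I − P̃)⁻¹`. -/
theorem stmt_10 {V W : Type*} [Fintype V] [Fintype W] [DecidableEq V] [DecidableEq W]
    (P : Matrix (V ⊕ W) (V ⊕ W) ℝ)
    (hA : IsUnit (1 - P))
    (hW : IsUnit (1 - P.submatrix Sum.inr Sum.inr)) :
    IsUnit (1 - (P.submatrix Sum.inl Sum.inl +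
        P.submatrix Sum.inl Sum.inr * (1 - P.submatrix Sum.inr Sum.inr)⁻¹ *
          P.submatrix Sum.inr Sum.inl)) ∧
    ((1 - P)⁻¹).submatrix Sum.inl Sum.inl =
      (1 - (P.submatrix Sum.inl Sum.inl +
        P.submatrix Sum.inl Sum.inr * (1 - P.submatrix Sum.inr Sum.inr)⁻¹ *
          P.submatrix Sum.inr Sum.inl))⁻¹ := by
  set A := (1 : Matrix V V ℝ) - P.submatrix Sum.inl Sum.inl with hAdef
  set B := -P.submatrix Sum.inl Sum.inr with hBdef
  set C := -P.submatrix Sum.inr Sum.inl with hCdef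
  set D := (1 : Matrix W W ℝ) - P.submatrix Sum.inr Sum.inr with hDdef
  have hM : (1 : Matrix (V ⊕ W) (V ⊕ W) ℝ) - P = fromBlocks A B C D := by
    ext (i | i) (j | j) <;>
      simp [hAdef, hBdef, hCdef, hDdef, fromBlocks, Matrix.one_apply, Matrix.sub_apply]
  haveI iD : Invertible D := hW.nonempty_invertible.some
  haveI iM : Invertible (fromBlocks A B C D) := by
    rw [← hM]; exact hA.nonempty_invertible.some
  haveI iS : Invertible (A - B * ⅟ D * C) :=
    invertibleOfFromBlocks₂₂Invertible A B C D
  have hS : A - B * ⅟ D * C =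
      1 - (P.submatrix Sum.inl Sum.inl +
        P.submatrix Sum.inl Sum.inr * (1 - P.submatrix Sum.inr Sum.inr)⁻¹ *
          P.submatrix Sum.inr Sum.inl) := by
    rw [invOf_eq_nonsing_inv, hBdef, hCdef, hAdef, ← hDdef]
    simp only [Matrix.neg_mul, Matrix.mul_neg, neg_neg, sub_sub]
  have hUnit : IsUnit (1 - (P.submatrix Sum.inl Sum.inl +
      P.submatrix Sum.inl Sum.inr * (1 - P.submatrix Sum.inr Sum.inr)⁻¹ *
        P.submatrix Sum.inr Sum.inl)) := by
    rw [← hS]; exact isUnit_of_invertible _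
  refine ⟨hUnit, ?_⟩
  have hinv : ((1 : Matrix (V ⊕ W) (V ⊕ W) ℝ) - P)⁻¹ = ⅟ (fromBlocks A B C D) := by
    rw [hM, invOf_eq_nonsing_inv]
  rw [hinv, invOf_fromBlocks₂₂_eq A B C D]
  have : (fromBlocks (⅟ (A - B * ⅟ D * C)) (-(⅟ (A - B * ⅟ D * C) * B * ⅟ D))
        (-(⅟ D * C * ⅟ (A - B * ⅟ D * C))) (⅟ D + ⅟ D * C * ⅟ (A - B * ⅟ D * C) * B * ⅟ D)).submatrix
        Sum.inl Sum.inl = ⅟ (A - B * ⅟ D * C) := rfl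
  rw [this, invOf_eq_nonsing_inv, hS]
end

section
/- Let X_n be an irreducible Markov chain on the finite set Ā = A ∪ ∂A with ∂A ≠ ∅, let x,y be distinct points of A, and let q(x,y) be the probability that the chain starting at x reaches y strictly before leaving A and strictly before returning to x, i.e. q(x,y) = μ_x(σ_y < min(τ_x, T_A)). Then G_A(x,y) = q(x,y) · G_A(x,x) · G_{A\{x}}(y,y), i.e. G_A(x,y) = q(x,y) F_V(A) with V = {x,y}. -/
/-!
Both sides are sums of path weights `P u t₁ * P t₁ t₂ * ⋯ * P tₙ₋₁ tₙ` over finite paths, by the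
cylinder formula for the law of the chain. A path from `x` to `y` inside `A` splits uniquely at
its last visit to `x` into a loop at `x` inside `A` and a path from `x` to `y` that never returns
to `x`; the latter splits uniquely at its first visit to `y` into a first passage from `x` to `y`
and a path from `y` to `y` inside `A ∖ {x}`. Path weights are multiplicative under
concatenation, so the sum over paths factorizes.
-/

open MeasureTheory
open scoped ENNReal

/-- `G_B(u,v)` probabilistically: the expected number of visits to `v` strictly before the
exit time of `B`, for the chain with law `μu` (started at `u`). The time `n` counts iff
`ω n = v` and `ω j ∈ B` for all `j ≤ n` (i.e. `n < T_B`). -/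
noncomputable def greenVisits {S : Type*} [MeasurableSpace S] (μu : Measure (ℕ → S)) (B : Finset S) (v : S) :
    ℝ≥0∞ :=
  ∫⁻ ω, ∑' n : ℕ, ({m : ℕ | ω m = v ∧ ∀ j ≤ m, ω j ∈ B}).indicator (fun _ => 1) n ∂μu

namespace List

variable {α : Type*}

theorem eq_of_append_cons_eq_of_notMem_left {a : α} {p p' r r' : List α} (hp : a ∉ p)
    (hp' : a ∉ p') (h : p ++ a :: r = p' ++ a :: r') : p = p' ∧ r = r' := by
  induction p generalizing p' with
  | nil =>
    cases p' with
    | nil => simpa using h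
    | cons c p' =>
      simp only [nil_append, cons_append, cons.injEq] at h
      exact absurd (h.1 ▸ mem_cons_self) hp'
  | cons b p ih =>
    cases p' with
    | nil =>
      simp only [nil_append, cons_append, cons.injEq] at h
      exact absurd (h.1 ▸ mem_cons_self) hp
    | cons c p' =>
      simp only [cons_append, cons.injEq] at h
      obtain ⟨hpp, hrr⟩ := ih (fun h' => hp (mem_cons_of_mem _ h'))
        (fun h' => hp' (mem_cons_of_mem _ h')) h.2
      exact ⟨by rw [h.1, hpp], hrr⟩

theorem eq_of_append_cons_eq_of_notMem_right {a : α} {p p' r r' : List α} (hr : a ∉ r)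
    (hr' : a ∉ r') (h : p ++ a :: r = p' ++ a :: r') : p = p' ∧ r = r' := by
  have := congrArg reverse h
  simp only [reverse_append, reverse_cons, append_assoc, singleton_append] at this
  obtain ⟨h₁, h₂⟩ := eq_of_append_cons_eq_of_notMem_left (by simpa) (by simpa) this
  exact ⟨reverse_injective h₂, reverse_injective h₁⟩

theorem eq_append_cons_of_mem_of_notMem_right {a : α} {l : List α} (h : a ∈ l) :
    ∃ p r, l = p ++ a :: r ∧ a ∉ r := by
  obtain ⟨r, p, hl, hr⟩ := eq_append_cons_of_mem (mem_reverse.2 h)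
  exact ⟨p.reverse, r.reverse, by simpa using congrArg reverse hl, by simpa using hr⟩

theorem getLast?_cons_append_of_getLast?_eq {u v : α} {l₁ : List α}
    (h : (u :: l₁).getLast? = some v) (l₂ : List α) :
    (u :: (l₁ ++ l₂)).getLast? = (v :: l₂).getLast? := by
  obtain ⟨q, hq⟩ := getLast?_eq_some_iff.1 h
  rw [← cons_append, hq, append_assoc, singleton_append, getLast?_append_cons]

end List

theorem ENNReal.tsum_eq_mul_tsum_of_equiv_prod {α β γ : Type*} (e : α × β ≃ γ)
    {f : α → ℝ≥0∞} {g : β → ℝ≥0∞} {h : γ → ℝ≥0∞} (he : ∀ a b, h (e (a, b)) = f a * g b) :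
    ∑' c, h c = (∑' a, f a) * ∑' b, g b := by
  rw [← e.tsum_eq, ENNReal.tsum_prod', ← ENNReal.tsum_mul_right]
  refine tsum_congr fun a => ?_
  simp only [he, ENNReal.tsum_mul_left]

namespace MarkovChain

variable {S : Type*}

/-- A path is encoded by its starting state `u` and the list `t` of the states it visits after
time `0`. -/
noncomputable def pathWeight (P : Matrix S S ℝ) : S → List S → ℝ≥0∞
  | _, [] => 1
  | u, s :: t => ENNReal.ofReal (P u s) * pathWeight P s t

theorem pathWeight_append (P : Matrix S S ℝ) {u v : S} {t₁ : List S}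
    (h : (u :: t₁).getLast? = some v) (t₂ : List S) :
    pathWeight P u (t₁ ++ t₂) = pathWeight P u t₁ * pathWeight P v t₂ := by
  induction t₁ generalizing u with
  | nil => cases h; simp [pathWeight]
  | cons s t ih =>
    rw [List.getLast?_cons_cons] at h
    simp [pathWeight, ih h, mul_assoc]

theorem pathWeight_eq_prod (P : Matrix S S ℝ) (d u : S) (t : List S) :
    pathWeight P u t = ∏ i ∈ Finset.range t.length,
      ENNReal.ofReal (P ((u :: t).getD i d) ((u :: t).getD (i + 1) d)) := by
  induction t generalizing u with
  | nil => simp [pathWeight]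
  | cons s t ih => simp [pathWeight, ih s, Finset.prod_range_succ', mul_comm]

def pathsWithin (B : Finset S) (u v : S) : Set (List S) :=
  {t | (u :: t).getLast? = some v ∧ ∀ s ∈ t, s ∈ B}

def firstPassages (A : Finset S) (x y : S) : Set (List S) :=
  {t | ∃ m, t = m ++ [y] ∧ ∀ s ∈ m, s ∈ A ∧ s ≠ x ∧ s ≠ y}

def pathPrefix (ω : ℕ → S) (n : ℕ) : List S := List.ofFn fun i : Fin (n + 1) => ω i

theorem pathPrefix_eq_iff {ω : ℕ → S} {n : ℕ} {l : List S} (d : S) (hl : l.length = n + 1) :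
    pathPrefix ω n = l ↔ ∀ i ≤ n, ω i = l.getD i d := by
  constructor
  · rintro rfl i hi
    rw [List.getD_eq_getElem _ _ (by simp [pathPrefix]; omega)]
    simp only [pathPrefix, List.getElem_ofFn]
  · intro h
    refine List.ext_getElem (by simp [pathPrefix, hl]) fun i h₁ h₂ => ?_
    simp only [pathPrefix, List.getElem_ofFn]
    rw [h i (by simp [pathPrefix] at h₁; omega), List.getD_eq_getElem _ _ h₂]

theorem getLast?_pathPrefix (ω : ℕ → S) (n : ℕ) : (pathPrefix ω n).getLast? = some (ω n) := by
  rw [pathPrefix, List.ofFn_succ', List.concat_eq_append, List.getLast?_concat]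
  rfl

theorem mem_pathPrefix {ω : ℕ → S} {n : ℕ} {s : S} :
    s ∈ pathPrefix ω n ↔ ∃ i ≤ n, ω i = s := by
  rw [pathPrefix, List.mem_ofFn]
  exact ⟨fun ⟨i, h⟩ => ⟨i, Nat.lt_succ_iff.1 i.2, h⟩,
    fun ⟨i, hi, h⟩ => ⟨⟨i, Nat.lt_succ_of_le hi⟩, h⟩⟩

theorem tail_pathPrefix_mem_firstPassages_iff {A : Finset S} {x y : S} {ω : ℕ → S} {n : ℕ} :
    (pathPrefix ω n).tail ∈ firstPassages A x y ↔
      1 ≤ n ∧ ω n = y ∧ ∀ j, 1 ≤ j → j < n → ω j ∈ A ∧ ω j ≠ x ∧ ω j ≠ y := by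
  rcases n with _ | k
  · simp [pathPrefix, firstPassages]
  have htail : (pathPrefix ω (k + 1)).tail =
      (List.ofFn fun i : Fin k => ω (i + 1)) ++ [ω (k + 1)] := by
    rw [pathPrefix, List.ofFn_succ, List.tail_cons, List.ofFn_succ', List.concat_eq_append]
    simp
  simp only [htail, firstPassages, Set.mem_ofPred_eq]
  constructor
  · rintro ⟨m, hm, hgood⟩
    obtain ⟨rfl, hy⟩ := List.append_inj' hm rfl
    refine ⟨by omega, by simpa using hy, fun j hj₁ hj₂ => ?_⟩
    obtain ⟨j, rfl⟩ : ∃ i, j = i + 1 := ⟨j - 1, by omega⟩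
    exact hgood _ (List.mem_ofFn.2 ⟨⟨j, by omega⟩, rfl⟩)
  · rintro ⟨-, hy, hgood⟩
    refine ⟨_, by rw [hy], fun s hs => ?_⟩
    obtain ⟨i, rfl⟩ := List.mem_ofFn.1 hs
    exact hgood _ (by omega) (by omega)

theorem measurableSet_pathPrefix [MeasurableSpace S] [MeasurableSingletonClass S] [Countable S]
    (C : List S → Prop) (n : ℕ) : MeasurableSet {ω : ℕ → S | C (pathPrefix ω n)} :=
  (measurable_pi_lambda (fun ω : ℕ → S => fun i : Fin (n + 1) => ω i)
    fun _ => measurable_pi_apply _) (Set.to_countable {a | C (List.ofFn a)}).measurableSet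

def IsMarkovChainLaw [DecidableEq S] [MeasurableSpace S] (P : Matrix S S ℝ) (u : S)
    (μ : Measure (ℕ → S)) : Prop :=
  ∀ (n : ℕ) (a : ℕ → S), μ {ω | ∀ i ≤ n, ω i = a i} =
    ENNReal.ofReal ((if a 0 = u then (1 : ℝ) else 0) * ∏ i ∈ Finset.range n, P (a i) (a (i + 1)))

section Law

variable [DecidableEq S] [MeasurableSpace S] {P : Matrix S S ℝ} {u : S} {μ : Measure (ℕ → S)}

theorem measure_pathPrefix_eq_cons (hP : ∀ v w, 0 ≤ P v w) (hμ : IsMarkovChainLaw P u μ)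
    (v : S) (t : List S) :
    μ {ω | pathPrefix ω t.length = v :: t} = if v = u then pathWeight P u t else 0 := by
  have hcyl : {ω | pathPrefix ω t.length = v :: t} =
      {ω | ∀ i ≤ t.length, ω i = (v :: t).getD i v} :=
    Set.ext fun ω => pathPrefix_eq_iff v rfl
  rw [hcyl, hμ, List.getD_cons_zero]
  split_ifs with hvu
  · subst hvu
    rw [one_mul, ENNReal.ofReal_prod_of_nonneg fun _ _ => hP _ _, pathWeight_eq_prod P v]
  · simp

theorem tsum_measure_pathPrefix_eq_cons (hP : ∀ v w, 0 ≤ P v w) (hμ : IsMarkovChainLaw P u μ)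
    (v : S) (t : List S) :
    ∑' n, μ {ω | pathPrefix ω n = v :: t} = if v = u then pathWeight P u t else 0 := by
  rw [tsum_eq_single t.length, measure_pathPrefix_eq_cons hP hμ]
  intro n hn
  convert measure_empty (μ := μ)
  refine Set.eq_empty_of_forall_notMem fun ω hω => hn ?_
  simpa [pathPrefix] using congrArg List.length hω.out

theorem tsum_measure_pathPrefix [MeasurableSingletonClass S] [Countable S]
    (hP : ∀ v w, 0 ≤ P v w) (hμ : IsMarkovChainLaw P u μ) (C : List S → Prop) :
    ∑' n, μ {ω | C (pathPrefix ω n)} = ∑' t : {t | C (u :: t)}, pathWeight P u t := by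
  have hfibres (n : ℕ) : μ {ω | C (pathPrefix ω n)} =
      ∑' l : {l | C l}, μ {ω | pathPrefix ω n = l} :=
    (tsum_measure_preimage_singleton (Set.to_countable _)
      fun l _ => measurableSet_pathPrefix (· = l) n).symm
  simp_rw [hfibres]
  rw [ENNReal.tsum_comm]
  let cons : {t | C (u :: t)} → {l | C l} := fun t => ⟨u :: t, t.2⟩
  have hcons : Function.Injective cons := fun t t' h =>
    Subtype.ext (List.cons_injective (congrArg Subtype.val h))
  have hsupport : Function.support (fun l : {l | C l} => ∑' n, μ {ω | pathPrefix ω n = l}) ⊆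
      Set.range cons := by
    rintro ⟨_ | ⟨v, t⟩, hl⟩ hne
    · simp [pathPrefix] at hne
    · rw [Function.mem_support, tsum_measure_pathPrefix_eq_cons hP hμ] at hne
      obtain rfl : v = u := by by_contra h; simp [h] at hne
      exact ⟨⟨t, hl⟩, rfl⟩
  rw [← hcons.tsum_eq hsupport]
  exact tsum_congr fun t => by simp [cons, tsum_measure_pathPrefix_eq_cons hP hμ]

theorem greenVisits_eq_tsum_pathWeight [MeasurableSingletonClass S] [Countable S]
    (hP : ∀ v w, 0 ≤ P v w) (hμ : IsMarkovChainLaw P u μ) {B : Finset S} (hu : u ∈ B) (v : S) :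
    greenVisits μ B v = ∑' t : pathsWithin B u v, pathWeight P u t := by
  let C : List S → Prop := fun l => l.getLast? = some v ∧ ∀ s ∈ l, s ∈ B
  have hvisit (ω : ℕ → S) (n : ℕ) :
      ({m | ω m = v ∧ ∀ j ≤ m, ω j ∈ B}).indicator (fun _ => (1 : ℝ≥0∞)) n =
        {ω | C (pathPrefix ω n)}.indicator 1 ω := by
    have : (ω n = v ∧ ∀ j ≤ n, ω j ∈ B) ↔ C (pathPrefix ω n) := by
      simp [C, getLast?_pathPrefix, mem_pathPrefix]
    simp [Set.indicator_apply, this]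
  have hC : {t | C (u :: t)} = pathsWithin B u v := by
    ext t
    simp [C, pathsWithin, hu]
  unfold greenVisits
  simp_rw [hvisit]
  rw [lintegral_tsum fun n => (measurable_one.indicator
    (measurableSet_pathPrefix C n)).aemeasurable]
  simp_rw [lintegral_indicator_one (measurableSet_pathPrefix C _)]
  rw [tsum_measure_pathPrefix hP hμ, hC]

theorem measure_firstPassage [MeasurableSingletonClass S] [Countable S]
    (hP : ∀ v w, 0 ≤ P v w) {x : S} (hμ : IsMarkovChainLaw P x μ) (A : Finset S) (y : S) :
    μ {ω | ∃ k : ℕ, 1 ≤ k ∧ ω k = y ∧ ∀ j : ℕ, 1 ≤ j → j < k → ω j ≠ x ∧ ω j ∈ A} =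
      ∑' t : firstPassages A x y, pathWeight P x t := by
  let C : List S → Prop := fun l => l.tail ∈ firstPassages A x y
  let H : ℕ → Set (ℕ → S) := fun n => {ω | C (pathPrefix ω n)}
  have hunion : {ω | ∃ k : ℕ, 1 ≤ k ∧ ω k = y ∧ ∀ j : ℕ, 1 ≤ j → j < k → ω j ≠ x ∧ ω j ∈ A} =
      ⋃ n, H n := by
    ext ω
    simp only [Set.mem_ofPred_eq, Set.mem_iUnion, H, C, tail_pathPrefix_mem_firstPassages_iff]
    constructor
    · intro hk
      -- the first visit to `y` after time `0`
      refine ⟨Nat.find hk, (Nat.find_spec hk).1, (Nat.find_spec hk).2.1, fun j hj₁ hj₂ => ?_⟩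
      obtain ⟨hjx, hjA⟩ := (Nat.find_spec hk).2.2 j hj₁ hj₂
      refine ⟨hjA, hjx, fun hjy => Nat.find_min hk hj₂ ⟨hj₁, hjy, fun i hi₁ hi₂ => ?_⟩⟩
      exact (Nat.find_spec hk).2.2 i hi₁ (hi₂.trans hj₂)
    · rintro ⟨n, hn, hy, hgood⟩
      exact ⟨n, hn, hy, fun j hj₁ hj₂ => ⟨(hgood j hj₁ hj₂).2.1, (hgood j hj₁ hj₂).1⟩⟩
  have hdisj : Pairwise (Function.onFun Disjoint H) := by
    refine (pairwise_disjoint_on H).2 fun n n' hlt => Set.disjoint_left.2 fun ω hn hn' => ?_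
    simp only [H, C, Set.mem_ofPred_eq, tail_pathPrefix_mem_firstPassages_iff] at hn hn'
    exact (hn'.2.2 n hn.1 hlt).2.2 hn.2.1
  rw [hunion, measure_iUnion hdisj fun n => measurableSet_pathPrefix C n]
  exact tsum_measure_pathPrefix hP hμ C

end Law

section Decomposition

variable [DecidableEq S] (P : Matrix S S ℝ) {A : Finset S} {x y : S}

theorem tsum_pathsWithin_eq_mul_of_lastVisit :
    ∑' t : pathsWithin A x y, pathWeight P x t =
      (∑' t : pathsWithin A x x, pathWeight P x t) *
        ∑' t : pathsWithin (A.erase x) x y, pathWeight P x t := by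
  let glue : pathsWithin A x x × pathsWithin (A.erase x) x y → pathsWithin A x y :=
    fun p => ⟨p.1.1 ++ p.2.1, by
      obtain ⟨⟨t₁, ht₁x, ht₁A⟩, ⟨r, hry, hrA⟩⟩ := p
      refine ⟨(List.getLast?_cons_append_of_getLast?_eq ht₁x r).trans hry, fun s hs => ?_⟩
      rcases List.mem_append.1 hs with hs | hs
      exacts [ht₁A s hs, Finset.mem_of_mem_erase (hrA s hs)]⟩
  have hinj : Function.Injective glue := by
    intro p p' h
    obtain ⟨⟨t₁, ht₁x, _⟩, ⟨r, _, hrA⟩⟩ := p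
    obtain ⟨⟨t₁', ht₁x', _⟩, ⟨r', _, hrA'⟩⟩ := p'
    obtain ⟨q, hq⟩ := List.getLast?_eq_some_iff.1 ht₁x
    obtain ⟨q', hq'⟩ := List.getLast?_eq_some_iff.1 ht₁x'
    have hglued : q ++ x :: r = q' ++ x :: r' := by
      simpa [glue, ← List.cons_append, hq, hq'] using congrArg (fun t => x :: t.1) h
    obtain ⟨rfl, rfl⟩ := List.eq_of_append_cons_eq_of_notMem_right
      (fun hx => (Finset.mem_erase.1 (hrA x hx)).1 rfl)
      (fun hx => (Finset.mem_erase.1 (hrA' x hx)).1 rfl) hglued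
    obtain rfl : t₁ = t₁' := List.cons_injective (hq.trans hq'.symm)
    rfl
  have hsurj : Function.Surjective glue := by
    rintro ⟨t, hty, htA⟩
    by_cases hxt : x ∈ t
    · obtain ⟨p, r, rfl, hxr⟩ := List.eq_append_cons_of_mem_of_notMem_right hxt
      refine ⟨⟨⟨p ++ [x], by rw [← List.cons_append, List.getLast?_concat],
        fun s hs => htA s ?_⟩, ⟨r, ?_, fun s hs => ?_⟩⟩, Subtype.ext (by simp [glue])⟩
      · simp only [List.mem_append, List.mem_singleton] at hs
        simp [hs.imp_right Or.inl]
      · rwa [← List.cons_append, List.getLast?_append_cons] at hty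
      · exact Finset.mem_erase.2 ⟨fun h => hxr (h ▸ hs), htA s (by simp [hs])⟩
    · exact ⟨⟨⟨[], rfl, by simp⟩, ⟨t, hty, fun s hs =>
        Finset.mem_erase.2 ⟨fun h => hxt (h ▸ hs), htA s hs⟩⟩⟩, rfl⟩
  refine ENNReal.tsum_eq_mul_tsum_of_equiv_prod (Equiv.ofBijective glue ⟨hinj, hsurj⟩) ?_
  rintro ⟨t₁, ht₁x, -⟩ ⟨r, -, -⟩
  exact pathWeight_append P ht₁x r

theorem tsum_pathsWithin_erase_eq_mul_of_firstPassage (hy : y ∈ A) (hxy : x ≠ y) :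
    ∑' t : pathsWithin (A.erase x) x y, pathWeight P x t =
      (∑' t : firstPassages A x y, pathWeight P x t) *
        ∑' t : pathsWithin (A.erase x) y y, pathWeight P y t := by
  have hlast {t₂ : List S} (ht₂ : t₂ ∈ firstPassages A x y) : (x :: t₂).getLast? = some y := by
    obtain ⟨m, rfl, -⟩ := ht₂
    rw [← List.cons_append, List.getLast?_concat]
  let glue : firstPassages A x y × pathsWithin (A.erase x) y y → pathsWithin (A.erase x) x y :=
    fun p => ⟨p.1.1 ++ p.2.1, by
      obtain ⟨⟨_, ⟨m, rfl, hm⟩⟩, ⟨t₃, ht₃y, ht₃A⟩⟩ := p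
      refine ⟨(List.getLast?_cons_append_of_getLast?_eq (hlast ⟨m, rfl, hm⟩) t₃).trans ht₃y,
        fun s hs => ?_⟩
      simp only [List.append_assoc, List.singleton_append, List.mem_append, List.mem_cons] at hs
      rcases hs with hs | rfl | hs
      exacts [Finset.mem_erase.2 ⟨(hm s hs).2.1, (hm s hs).1⟩, Finset.mem_erase.2 ⟨hxy.symm, hy⟩,
        ht₃A s hs]⟩
  have hinj : Function.Injective glue := by
    intro p p' h
    obtain ⟨⟨_, ⟨m, rfl, hm⟩⟩, ⟨t₃, _⟩⟩ := p
    obtain ⟨⟨_, ⟨m', rfl, hm'⟩⟩, ⟨t₃', _⟩⟩ := p'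
    have hglued : m ++ y :: t₃ = m' ++ y :: t₃' := by simpa [glue] using congrArg Subtype.val h
    obtain ⟨rfl, rfl⟩ := List.eq_of_append_cons_eq_of_notMem_left
      (fun hym => (hm y hym).2.2 rfl) (fun hym => (hm' y hym).2.2 rfl) hglued
    rfl
  have hsurj : Function.Surjective glue := by
    rintro ⟨r, hry, hrA⟩
    have hyr : y ∈ r := (List.mem_cons.1 (List.mem_of_getLast? hry)).resolve_left hxy.symm
    obtain ⟨m, t₃, rfl, hym⟩ := List.eq_append_cons_of_mem hyr
    refine ⟨⟨⟨m ++ [y], m, rfl, fun s hs => ?_⟩, ⟨t₃, ?_, fun s hs => hrA s (by simp [hs])⟩⟩,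
      Subtype.ext (by simp [glue])⟩
    · obtain ⟨hsx, hsA⟩ := Finset.mem_erase.1 (hrA s (by simp [hs]))
      exact ⟨hsA, hsx, fun h => hym (h ▸ hs)⟩
    · rwa [← List.cons_append, List.getLast?_append_cons] at hry
  refine ENNReal.tsum_eq_mul_tsum_of_equiv_prod (Equiv.ofBijective glue ⟨hinj, hsurj⟩) ?_
  rintro ⟨t₂, ht₂⟩ ⟨t₃, _⟩
  exact pathWeight_append P (hlast ht₂) t₃

end Decomposition

end MarkovChain

theorem stmt_11_general {S : Type*} [Fintype S] [DecidableEq S]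
    [MeasurableSpace S] [MeasurableSingletonClass S]
    (A : Finset S)
    (P : Matrix S S ℝ) (hnn : ∀ u v, 0 ≤ P u v)
    (μ : S → Measure (ℕ → S))
    (hμ : ∀ (u : S) (n : ℕ) (a : ℕ → S),
      μ u {ω | ∀ i ≤ n, ω i = a i} =
        ENNReal.ofReal ((if a 0 = u then (1 : ℝ) else 0) *
          ∏ i ∈ Finset.range n, P (a i) (a (i + 1))))
    (x y : S) (hx : x ∈ A) (hy : y ∈ A) (hxy : x ≠ y) :
    greenVisits (μ x) A y =
      μ x {ω | ∃ k : ℕ, 1 ≤ k ∧ ω k = y ∧ ∀ j : ℕ, 1 ≤ j → j < k → ω j ≠ x ∧ ω j ∈ A}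
        * (greenVisits (μ x) A x * greenVisits (μ y) (A.erase x) y) := by
  open MarkovChain in
  rw [greenVisits_eq_tsum_pathWeight hnn (hμ x) hx y,
    greenVisits_eq_tsum_pathWeight hnn (hμ x) hx x,
    greenVisits_eq_tsum_pathWeight hnn (hμ y) (Finset.mem_erase.2 ⟨hxy.symm, hy⟩) y,
    measure_firstPassage hnn (hμ x), tsum_pathsWithin_eq_mul_of_lastVisit,
    tsum_pathsWithin_erase_eq_mul_of_firstPassage P hy hxy, mul_left_comm]

/-- For an irreducible Markov chain on the finite set `Ā = A ∪ ∂A`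
(`∂A ≠ ∅`), distinct `x,y ∈ A`, and
`q(x,y) = μ_x(σ_y < min(τ_x, T_A))` (the probability of reaching `y` strictly before
leaving `A` and before returning to `x`), one has
`G_A(x,y) = q(x,y) · G_A(x,x) · G_{A∖{x}}(y,y)`, i.e. `G_A(x,y) = q(x,y)·F_{{x,y}}(A)`. -/
theorem stmt_11 {S : Type*} [Fintype S] [DecidableEq S]
    [MeasurableSpace S] [MeasurableSingletonClass S]
    (A : Finset S) (hbd : ∃ z, z ∉ A)
    (P : Matrix S S ℝ) (hnn : ∀ u v, 0 ≤ P u v) (hrow : ∀ u, ∑ v, P u v = 1)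
    (hirr : ∀ u v : S, ∃ n : ℕ, 0 < (P ^ n) u v)
    (μ : S → Measure (ℕ → S)) (hprob : ∀ u, IsProbabilityMeasure (μ u))
    (hμ : ∀ (u : S) (n : ℕ) (a : ℕ → S),
      μ u {ω | ∀ i ≤ n, ω i = a i} =
        ENNReal.ofReal ((if a 0 = u then (1 : ℝ) else 0) *
          ∏ i ∈ Finset.range n, P (a i) (a (i + 1))))
    (x y : S) (hx : x ∈ A) (hy : y ∈ A) (hxy : x ≠ y) :
    greenVisits (μ x) A y =
      μ x {ω | ∃ k : ℕ, 1 ≤ k ∧ ω k = y ∧ ∀ j : ℕ, 1 ≤ j → j < k → ω j ≠ x ∧ ω j ∈ A}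
        * (greenVisits (μ x) A x * greenVisits (μ y) (A.erase x) y) :=
  stmt_11_general A P hnn μ hμ x y hx hy hxy
end

section
/- For every n ≥ 1, the number of spanning trees of the complete graph on n+1 vertices is (n+1)^{n−1}. -/
/-!
Joyal's proof. Say `p : α → α` is in `F Z` if it fixes `Z` pointwise and every orbit eventually
enters `Z`. An endofunction is the same as the permutation it induces on its periodic points `Z`
together with an element of `F Z`. An element of `F {b}` with a marked point `a` is the same as its
path `a → ⋯ → b`, a linear ordering of a set `Z`, together with an element of `F Z`. As `Z` has as
many permutations as linear orderings, `n * ∑ b, #F {b} = n ^ n` for `n = #α`. Finally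
`p ↦ (graph with edges v — p v)` identifies `F {b}` with the trees on `α`, heights under `p` being
graph distances to `b`; hence `n ^ 2 * #trees = n ^ n`.
-/

open Function Set

namespace Cayley

variable {α : Type*}

lemma exists_iterate_mem_of_eqOn_compl {f g : α → α} {Z : Set α} (hfg : EqOn f g Zᶜ)
    {k : ℕ} {v : α} (hk : g^[k] v ∈ Z) : ∃ j, f^[j] v ∈ Z := by
  induction k generalizing v with
  | zero => exact ⟨0, hk⟩
  | succ k ih =>
    by_cases hv : v ∈ Z
    · exact ⟨0, hv⟩
    rw [iterate_succ_apply, ← hfg hv] at hk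
    obtain ⟨j, hj⟩ := ih hk
    exact ⟨j + 1, hj⟩

lemma mem_of_isPeriodicPt_of_iterate_mem {f : α → α} {Z : Set α} (hZ : MapsTo f Z Z)
    {c k : ℕ} {v : α} (hv : IsPeriodicPt f c v) (hc : 0 < c) (hk : f^[k] v ∈ Z) : v ∈ Z := by
  have hle : k ≤ c * k := Nat.le_mul_of_pos_left k hc
  rw [← (hv.mul_const k).eq, ← Nat.sub_add_cancel hle, iterate_add_apply]
  exact hZ.iterate _ hk

lemma exists_iterate_mem_periodicPts [Finite α] (f : α → α) (v : α) :
    ∃ k, f^[k] v ∈ periodicPts f := by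
  obtain ⟨i, j, hij, heq⟩ := Finite.exists_ne_map_eq_of_infinite (fun n : ℕ => f^[n] v)
  wlog hlt : i < j generalizing i j
  · exact this j i hij.symm heq.symm (hij.lt_or_gt.resolve_left hlt)
  refine ⟨i, mk_mem_periodicPts (Nat.sub_pos_of_lt hlt) ?_⟩
  rw [IsPeriodicPt, IsFixedPt, ← iterate_add_apply, Nat.sub_add_cancel hlt.le]
  exact heq.symm

def IsRootedForest (Z : Set α) (f : α → α) : Prop :=
  (∀ z ∈ Z, f z = z) ∧ ∀ v, ∃ k, f^[k] v ∈ Z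

namespace IsRootedForest

variable {Z : Set α} {f : α → α}

lemma mapsTo (hf : IsRootedForest Z f) : MapsTo f Z Z :=
  fun z hz => (hf.1 z hz).symm ▸ hz

lemma periodicPts_subset (hf : IsRootedForest Z f) : periodicPts f ⊆ Z := by
  rintro v ⟨c, hc, hv⟩
  obtain ⟨k, hk⟩ := hf.2 v
  exact mem_of_isPeriodicPt_of_iterate_mem hf.mapsTo hv hc hk

lemma eq_of_isPeriodicPt {b : α} (hf : IsRootedForest {b} f) {c : ℕ} {v : α}
    (hv : IsPeriodicPt f c v) (hc : 0 < c) : v = b :=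
  hf.periodicPts_subset (mk_mem_periodicPts hc hv)

lemma nonempty [Nonempty α] (hf : IsRootedForest Z f) : Z.Nonempty :=
  let ⟨_, hk⟩ := hf.2 (Classical.arbitrary α)
  ⟨_, hk⟩

lemma of_eqOn_compl {g : α → α} (hf : ∀ v, ∃ k, f^[k] v ∈ Z) (hg : ∀ z ∈ Z, g z = z)
    (hfg : EqOn g f Zᶜ) : IsRootedForest Z g :=
  ⟨hg, fun v => let ⟨_, hk⟩ := hf v; exists_iterate_mem_of_eqOn_compl hfg hk⟩

lemma ne_nil [Nonempty α] {L : List α} (hf : IsRootedForest {v | v ∈ L} f) : L ≠ [] :=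
  let ⟨_, hv⟩ := hf.nonempty
  List.ne_nil_of_mem hv

end IsRootedForest

section Decomposition

variable [Finite α]

lemma periodicPts_piecewise {Z : Set α} [DecidablePred (· ∈ Z)] {σ : Equiv.Perm α} {g : α → α}
    (hσ : ∀ v ∉ Z, σ v = v) (hg : IsRootedForest Z g) : periodicPts (Z.piecewise σ g) = Z := by
  set f := Z.piecewise σ g
  have hσZ : MapsTo σ Z Z := fun v hv => by
    by_contra h
    exact h (by rwa [σ.injective (hσ _ h)])
  have hfZ : MapsTo f Z Z := fun v hv => by
    rw [show f v = σ v from piecewise_eq_of_mem _ _ _ hv]; exact hσZ hv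
  refine Subset.antisymm (fun v hv => ?_) (fun v hv => ?_)
  · obtain ⟨c, hc, hcv⟩ := hv
    obtain ⟨k, hk⟩ := hg.2 v
    obtain ⟨j, hj⟩ := exists_iterate_mem_of_eqOn_compl
      (fun w hw => piecewise_eq_of_notMem _ _ _ hw) hk (f := f)
    exact mem_of_isPeriodicPt_of_iterate_mem hfZ hcv hc hj
  · have hsemi : Semiconj ((↑) : Z → α) (hσZ.restrict σ Z Z) f := fun w =>
      (piecewise_eq_of_mem _ _ _ w.2).symm
    exact hsemi.mapsTo_periodicPts
      ((hσZ.restrict_inj.2 σ.injective.injOn).mem_periodicPts ⟨v, hv⟩)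

open Classical in
noncomputable def endoEquivPermForest : (α → α) ≃
    {x : Set α × Equiv.Perm α × (α → α) // (∀ v ∉ x.1, x.2.1 v = v) ∧ IsRootedForest x.1 x.2.2}
    where
  toFun f := ⟨(periodicPts f, Equiv.Perm.ofSubtype (.ofBijective _ (bijOn_periodicPts f).bijective),
      (periodicPts f).piecewise id f),
    fun _ hv => Equiv.Perm.ofSubtype_apply_of_not_mem _ hv,
    .of_eqOn_compl (exists_iterate_mem_periodicPts f) (fun _ hz => piecewise_eq_of_mem _ _ _ hz)
      (fun _ hv => piecewise_eq_of_notMem _ _ _ hv)⟩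
  invFun x := x.1.1.piecewise x.1.2.1 x.1.2.2
  left_inv f := by
    funext v
    by_cases hv : v ∈ periodicPts f
    · simp [hv, Equiv.Perm.ofSubtype_apply_of_mem]
    · simp [hv]
  right_inv := by
    rintro ⟨⟨Z, σ, g⟩, hσ, hg⟩
    dsimp only at hσ hg
    have hZ := periodicPts_piecewise hσ hg
    ext v
    · simp [hZ]
    · by_cases hv : v ∈ Z
      · simp [hZ, hv, Equiv.Perm.ofSubtype_apply_of_mem]
      · simp [Equiv.Perm.ofSubtype_apply_of_not_mem, hZ, hv, hσ v hv]
    · by_cases hv : v ∈ Z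
      · simp [hZ, hv, hg.1 v hv]
      · simp [hZ, hv]

end Decomposition

/-- Junk value `0` if the orbit of `v` never reaches `b`. -/
noncomputable def height (p : α → α) (b v : α) : ℕ := sInf {k | p^[k] v = b}

section Height

variable {p : α → α} {b v : α}

lemma iterate_height (h : ∃ k, p^[k] v = b) : p^[height p b v] v = b := Nat.sInf_mem h

lemma height_le {k : ℕ} (h : p^[k] v = b) : height p b v ≤ k := Nat.sInf_le h

lemma height_self : height p b b = 0 := Nat.le_zero.1 (height_le (k := 0) rfl)

lemma IsRootedForest.iterate_height (hp : IsRootedForest {b} p) (v : α) :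
    p^[height p b v] v = b :=
  Cayley.iterate_height (hp.2 v)

lemma IsRootedForest.height_apply (hp : IsRootedForest {b} p) (hv : v ≠ b) :
    height p b (p v) + 1 = height p b v := by
  have hpos : height p b v ≠ 0 := fun h => hv (by simpa [h] using hp.iterate_height v)
  apply le_antisymm
  · refine Nat.add_le_of_le_sub (Nat.one_le_iff_ne_zero.2 hpos) (height_le ?_)
    rw [← iterate_succ_apply, Nat.succ_eq_add_one, Nat.sub_add_cancel
      (Nat.one_le_iff_ne_zero.2 hpos), hp.iterate_height]
  · exact height_le (by rw [iterate_succ_apply, hp.iterate_height])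

lemma nodup_iterate_height (h : ∃ k, p^[k] v = b) :
    (List.iterate p v (height p b v + 1)).Nodup := by
  rw [← List.range_map_iterate]
  refine List.Nodup.map_on (fun i hi j hj hij => ?_) List.nodup_range
  rw [List.mem_range, Nat.lt_succ_iff] at hi hj
  by_contra hne
  wlog hlt : i < j generalizing i j
  · exact this j hj i hi hij.symm (Ne.symm hne) (lt_of_le_of_ne (not_lt.1 hlt) (Ne.symm hne))
  have hshort : p^[height p b v - j + i] v = b := by
    rw [iterate_add_apply, hij, ← iterate_add_apply, Nat.sub_add_cancel hj, iterate_height h]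
  have := height_le hshort
  omega

end Height

section Spine

variable [DecidableEq α] {L : List α} {g : α → α}

/-- Off `L` this is `g`, since `L.idxOf v = L.length` for `v ∉ L`; the last entry of `L` also goes
to its image under `g`. -/
def succAlong (L : List α) (g : α → α) (v : α) : α :=
  if h : L.idxOf v + 1 < L.length then L[L.idxOf v + 1] else g v

lemma succAlong_of_notMem {v : α} (hv : v ∉ L) : succAlong L g v = g v := by
  rw [succAlong, dif_neg (by rw [List.idxOf_eq_length_iff.2 hv]; omega)]

lemma succAlong_getElem (hL : L.Nodup) {i : ℕ} (hi : i + 1 < L.length) :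
    succAlong L g L[i] = L[i + 1] := by
  simp only [succAlong, hL.idxOf_getElem, dif_pos hi]

lemma succAlong_getLast (hL : L.Nodup) (hne : L ≠ []) :
    succAlong L g (L.getLast hne) = g (L.getLast hne) := by
  have hlen := List.length_pos_iff.2 hne
  rw [succAlong, dif_neg (by rw [List.getLast_eq_getElem, hL.idxOf_getElem]; omega)]

lemma iterate_succAlong_getElem (hL : L.Nodup) {i j : ℕ} (h : i + j < L.length) :
    (succAlong L g)^[j] L[i] = L[i + j] := by
  induction j with
  | zero => rfl
  | succ j ih => rw [iterate_succ_apply', ih (by omega), succAlong_getElem hL]; rfl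

lemma isRootedForest_succAlong (hL : L.Nodup) (hne : L ≠ [])
    (hg : IsRootedForest {v | v ∈ L} g) : IsRootedForest {L.getLast hne} (succAlong L g) := by
  have hlen := List.length_pos_iff.2 hne
  have hreach (i : ℕ) (hi : i < L.length) : (succAlong L g)^[L.length - 1 - i] L[i] ∈
      ({L.getLast hne} : Set α) := by
    rw [iterate_succAlong_getElem hL (by omega), List.getLast_eq_getElem]
    congr! 1
    omega
  refine ⟨fun z hz => ?_, fun v => ?_⟩
  · rw [hz, succAlong_getLast hL hne, hg.1 _ (List.getLast_mem hne)]
  · obtain ⟨k, hk⟩ := hg.2 v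
    obtain ⟨j, hj⟩ := exists_iterate_mem_of_eqOn_compl
      (fun w hw => succAlong_of_notMem hw) hk (f := succAlong L g)
    obtain ⟨i, hi, hij⟩ := List.getElem_of_mem hj
    exact ⟨_ + j, by rw [iterate_add_apply, ← hij]; exact hreach i hi⟩

lemma iterate_succAlong_head (hL : L.Nodup) (hne : L ≠ []) {j : ℕ} (hj : j < L.length) :
    (succAlong L g)^[j] (L.head hne) = L[j] := by
  rw [List.head_eq_getElem]
  simpa using iterate_succAlong_getElem hL (g := g) (i := 0) (by omega)

lemma iterate_succAlong_head_length (hL : L.Nodup) (hne : L ≠ []) :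
    List.iterate (succAlong L g) (L.head hne) L.length = L :=
  List.ext_getElem (List.length_iterate ..) fun _ _ hi => by
    rw [List.getElem_iterate, iterate_succAlong_head hL hne hi]

lemma height_succAlong (hL : L.Nodup) (hne : L ≠ []) :
    height (succAlong L g) (L.getLast hne) (L.head hne) + 1 = L.length := by
  have hlen := List.length_pos_iff.2 hne
  have hlast : (succAlong L g)^[L.length - 1] (L.head hne) = L.getLast hne := by
    rw [iterate_succAlong_head hL hne (by omega), List.getLast_eq_getElem]
  have hle := height_le hlast
  have heq := iterate_height ⟨_, hlast⟩
  set k := height (succAlong L g) (L.getLast hne) (L.head hne)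
  rw [iterate_succAlong_head hL hne (by omega), List.getLast_eq_getElem,
    hL.getElem_inj_iff] at heq
  omega

lemma succAlong_iterate_height {p : α → α} {b : α} (hp : IsRootedForest {b} p) (a : α) :
    succAlong (List.iterate p a (height p b a + 1))
      (fun v => if v ∈ List.iterate p a (height p b a + 1) then v else p v) = p := by
  set L := List.iterate p a (height p b a + 1)
  funext v
  by_cases hv : v ∈ L
  · obtain ⟨i, hi, rfl⟩ := List.getElem_of_mem hv
    by_cases hlt : i + 1 < L.length
    · rw [succAlong_getElem (nodup_iterate_height (hp.2 a)) hlt]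
      simp only [L, List.getElem_iterate, iterate_succ_apply']
    · have hb : L[i] = b := by
        simp only [L, List.getElem_iterate]
        convert hp.iterate_height a
        simp [L] at hi hlt
        omega
      have hne : L ≠ [] := List.ne_nil_of_mem hv
      have hlast : L[i] = L.getLast hne := by
        rw [List.getLast_eq_getElem]
        congr 1
        omega
      rw [hlast, succAlong_getLast (nodup_iterate_height (hp.2 a)), if_pos (List.getLast_mem _),
        ← hlast, hb, hp.1 b rfl]
  · rw [succAlong_of_notMem hv, if_neg hv]

/-- The set `Z` is determined by the list, but recording it lets the count be grouped by `Z`, as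
for `endoEquivPermForest`. -/
noncomputable def doublyRootedEquivSpineForest [Nonempty α] :
    {x : α × α × (α → α) // IsRootedForest {x.2.1} x.2.2} ≃
      {x : Set α × List α × (α → α) //
        (x.2.1.Nodup ∧ {v | v ∈ x.2.1} = x.1) ∧ IsRootedForest x.1 x.2.2} where
  toFun x :=
    let L := List.iterate x.1.2.2 x.1.1 (height x.1.2.2 x.1.2.1 x.1.1 + 1)
    ⟨({v | v ∈ L}, L, fun v => if v ∈ L then v else x.1.2.2 v),
      ⟨nodup_iterate_height (x.2.2 _), rfl⟩,
      .of_eqOn_compl (fun v => let ⟨k, hk⟩ := x.2.2 v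
          ⟨k, List.mem_iterate.2 ⟨_, Nat.lt_succ_self _, (x.2.iterate_height _).symm ▸ hk⟩⟩)
        (fun _ hz => if_pos hz) (fun _ hv => if_neg hv)⟩
  invFun x :=
    have hne : x.1.2.1 ≠ [] := IsRootedForest.ne_nil (x.2.1.2 ▸ x.2.2)
    ⟨(x.1.2.1.head hne, x.1.2.1.getLast hne, succAlong x.1.2.1 x.1.2.2),
      isRootedForest_succAlong x.2.1.1 hne (x.2.1.2 ▸ x.2.2)⟩
  left_inv := by
    rintro ⟨⟨a, b, p⟩, hp⟩
    dsimp only at hp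
    refine Subtype.ext (Prod.ext ?_ (Prod.ext ?_ (succAlong_iterate_height hp a)))
    · simp [List.head_eq_getElem]
    · simp only [List.getLast_eq_getElem, List.getElem_iterate, List.length_iterate,
        Nat.add_sub_cancel]
      exact hp.iterate_height a
  right_inv := by
    rintro ⟨⟨Z, L, g⟩, ⟨hL, hZ⟩, hg⟩
    dsimp only at hL hZ hg
    subst hZ
    have hne := IsRootedForest.ne_nil hg
    have hspine : List.iterate (succAlong L g) (L.head hne)
        (height (succAlong L g) (L.getLast hne) (L.head hne) + 1) = L := by
      rw [height_succAlong hL hne, iterate_succAlong_head_length hL hne]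
    refine Subtype.ext (Prod.ext ?_ (Prod.ext ?_ (funext fun v => ?_)))
    · simp only [hspine]
    · simp only [hspine]
    · simp only [hspine]
      split_ifs with hv
      · exact (hg.1 v hv).symm
      · exact succAlong_of_notMem hv

end Spine

section Counting

lemma card_subtype_prod_prod {ι β γ : Type*} [Fintype ι] (P : ι → β → Prop) (Q : ι → γ → Prop)
    [∀ i, Finite {b // P i b}] [∀ i, Finite {c // Q i c}] :
    Nat.card {x : ι × β × γ // P x.1 x.2.1 ∧ Q x.1 x.2.2} =
      ∑ i, Nat.card {b // P i b} * Nat.card {c // Q i c} := by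
  let e : {x : ι × β × γ // P x.1 x.2.1 ∧ Q x.1 x.2.2} ≃ Σ i, {b // P i b} × {c // Q i c} :=
    (Equiv.subtypeProdEquivSigmaSubtype fun i (y : β × γ) => P i y.1 ∧ Q i y.2).trans
      (Equiv.sigmaCongrRight fun _ => Equiv.subtypeProdEquivProd)
  rw [Nat.card_congr e, Nat.card_sigma]
  simp only [Nat.card_prod]

lemma card_perm_fixing_compl [Finite α] (Z : Set α) :
    Nat.card {σ : Equiv.Perm α // ∀ v ∉ Z, σ v = v} = (Nat.card Z).factorial := by
  classical
  rw [← Nat.card_congr (Equiv.Perm.subtypeEquivSubtypePerm (· ∈ Z)), Nat.card_perm]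

lemma card_nodup_list_with_set [Finite α] (Z : Set α) :
    Nat.card {L : List α // L.Nodup ∧ {v | v ∈ L} = Z} = (Nat.card Z).factorial := by
  classical
  have : Fintype Z := Fintype.ofFinite Z
  have hperm (L : List α) : L.Nodup ∧ {v | v ∈ L} = Z ↔ L ∈ Z.toFinset.toList.permutations := by
    rw [List.mem_permutations]
    constructor
    · rintro ⟨hL, rfl⟩
      exact (List.perm_ext_iff_of_nodup hL (Finset.nodup_toList _)).2 (by simp)
    · intro h
      refine ⟨h.nodup_iff.2 (Finset.nodup_toList _), ?_⟩
      ext v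
      simp [h.mem_iff]
  rw [Nat.card_congr ((Equiv.subtypeEquivRight hperm).trans
      (Equiv.subtypeEquivRight fun _ => List.mem_toFinset.symm)), Nat.card_eq_finsetCard,
    List.toFinset_card_of_nodup (List.nodup_permutations _ (Finset.nodup_toList _)),
    List.length_permutations, Finset.length_toList, Nat.card_eq_card_toFinset]

theorem card_mul_sum_card_isRootedForest [Fintype α] [DecidableEq α] [Nonempty α] :
    Fintype.card α * ∑ b, Nat.card {p : α → α // IsRootedForest {b} p} =
      Fintype.card α ^ Fintype.card α := by
  have : ∀ Z : Set α, Finite {L : List α // L.Nodup ∧ {v | v ∈ L} = Z} := fun Z =>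
    Nat.finite_of_card_ne_zero (by rw [card_nodup_list_with_set]; positivity)
  have hfun : Nat.card (α → α) = ∑ Z : Set α, (Nat.card Z).factorial *
      Nat.card {g // IsRootedForest Z g} := by
    rw [Nat.card_congr endoEquivPermForest]
    exact (card_subtype_prod_prod (fun Z (σ : Equiv.Perm α) => ∀ v ∉ Z, σ v = v)
      IsRootedForest).trans (by simp only [card_perm_fixing_compl])
  have hspine : Nat.card {x : α × α × (α → α) // IsRootedForest {x.2.1} x.2.2} =
      ∑ Z : Set α, (Nat.card Z).factorial * Nat.card {g // IsRootedForest Z g} := by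
    rw [Nat.card_congr doublyRootedEquivSpineForest]
    exact (card_subtype_prod_prod (fun Z (L : List α) => L.Nodup ∧ {v | v ∈ L} = Z)
      IsRootedForest).trans (by simp only [card_nodup_list_with_set])
  have hpairs : Nat.card {x : α × α × (α → α) // IsRootedForest {x.2.1} x.2.2} =
      Fintype.card α * ∑ b, Nat.card {p : α → α // IsRootedForest {b} p} := by
    rw [Nat.card_congr (Equiv.subtypeProdEquivSigmaSubtype
        fun (_ : α) (y : α × (α → α)) => IsRootedForest {y.1} y.2), Nat.card_sigma,
      Nat.card_congr (Equiv.subtypeProdEquivSigmaSubtype fun b p => IsRootedForest {b} p),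
      Nat.card_sigma, Finset.sum_const, Finset.card_univ, smul_eq_mul]
  rw [← hpairs, hspine, ← hfun, Nat.card_eq_fintype_card, Fintype.card_fun]

end Counting

section Trees

open SimpleGraph

def funGraph (p : α → α) : SimpleGraph α := SimpleGraph.fromRel fun v w => p v = w

lemma funGraph_adj {p : α → α} {v w : α} :
    (funGraph p).Adj v w ↔ v ≠ w ∧ (p v = w ∨ p w = v) :=
  fromRel_adj ..

namespace IsRootedForest

variable {p : α → α} {b : α}

lemma apply_ne (hp : IsRootedForest {b} p) {v : α} (hv : v ≠ b) : p v ≠ v :=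
  fun h => hv (hp.eq_of_isPeriodicPt (c := 1) h one_pos)

lemma height_le_height_add_one (hp : IsRootedForest {b} p) {u x : α}
    (hadj : (funGraph p).Adj u x) : height p b u ≤ height p b x + 1 := by
  obtain ⟨hne, hux | hxu⟩ := funGraph_adj.1 hadj
  · by_cases hu : u = b
    · simp [hu, height_self]
    · rw [← hp.height_apply hu, hux]
  · have hx : x ≠ b := by
      rintro rfl
      exact hne (hxu.symm.trans (hp.1 x rfl))
    have := hp.height_apply hx
    rw [hxu] at this
    omega

lemma height_le_length_add (hp : IsRootedForest {b} p) {u x : α} (w : (funGraph p).Walk u x) :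
    height p b u ≤ w.length + height p b x := by
  induction w with
  | nil => simp
  | cons hadj w ih =>
    rw [Walk.length_cons]
    have := hp.height_le_height_add_one hadj
    omega

lemma exists_walk_length_eq_height (hp : IsRootedForest {b} p) (v : α) :
    ∃ w : (funGraph p).Walk v b, w.length = height p b v := by
  induction hn : height p b v generalizing v with
  | zero => exact ⟨Walk.nil.copy (by simpa [hn] using (hp.iterate_height v).symm) rfl, by simp⟩
  | succ n ih =>
    have hv : v ≠ b := by rintro rfl; simp [height_self] at hn
    obtain ⟨w, hw⟩ := ih (p v) (by have := hp.height_apply hv; omega)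
    exact ⟨.cons (funGraph_adj.2 ⟨(hp.apply_ne hv).symm, .inl rfl⟩) w, by simp [hw]⟩

lemma dist_funGraph (hp : IsRootedForest {b} p) (v : α) :
    (funGraph p).dist v b = height p b v := by
  obtain ⟨w, hw⟩ := hp.exists_walk_length_eq_height v
  obtain ⟨w', hw'⟩ := Walk.reachable w |>.exists_walk_length_eq_dist
  exact le_antisymm (hw ▸ dist_le w) (by simpa [hw', height_self] using hp.height_le_length_add w')

lemma connected_funGraph (hp : IsRootedForest {b} p) : (funGraph p).Connected :=
  (connected_iff_exists_forall_reachable _).2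
    ⟨b, fun v => let ⟨w, _⟩ := hp.exists_walk_length_eq_height v; w.reachable.symm⟩

lemma card_edgeSet_funGraph (hp : IsRootedForest {b} p) :
    Nat.card (funGraph p).edgeSet = Nat.card {v // v ≠ b} := by
  refine (Nat.card_congr (Equiv.ofBijective
    (fun v : {v // v ≠ b} => (⟨s(v, p v), funGraph_adj.2 ⟨(hp.apply_ne v.2).symm, .inl rfl⟩⟩ :
      (funGraph p).edgeSet)) ⟨fun u w huw => ?_, ?_⟩)).symm
  · rcases Sym2.eq_iff.1 (congrArg Subtype.val huw) with ⟨h, -⟩ | ⟨hu, hw⟩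
    · exact Subtype.ext h
    · exact absurd (hp.eq_of_isPeriodicPt (c := 2)
        (show p (p u) = u by rw [hw, ← hu]) two_pos) u.2
  · rintro ⟨e, he⟩
    induction e using Sym2.ind with | _ x y => ?_
    obtain ⟨hne, hxy | hyx⟩ := funGraph_adj.1 he
    · refine ⟨⟨x, fun hx => hne ?_⟩, Subtype.ext (by simp [hxy])⟩
      rw [← hxy, hx, hp.1 b rfl]
    · refine ⟨⟨y, fun hy => hne ?_⟩, Subtype.ext (by simp [hyx, Sym2.eq_swap])⟩
      rw [← hyx, hy, hp.1 b rfl]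

lemma isTree_funGraph [Finite α] (hp : IsRootedForest {b} p) : (funGraph p).IsTree := by
  have := Fintype.ofFinite α
  classical
  refine isTree_iff_connected_and_card.2 ⟨hp.connected_funGraph, ?_⟩
  have : 0 < Fintype.card α := Fintype.card_pos_iff.2 ⟨b⟩
  rw [hp.card_edgeSet_funGraph, Nat.card_eq_fintype_card, Nat.card_eq_fintype_card,
    Fintype.card_subtype_compl, Fintype.card_subtype_eq]
  omega

lemma eq_of_funGraph_eq {q : α → α} (hp : IsRootedForest {b} p) (hq : IsRootedForest {b} q)
    (h : funGraph p = funGraph q) : p = q := by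
  have hheight (v : α) : height p b v = height q b v := by
    rw [← hp.dist_funGraph, ← hq.dist_funGraph, h]
  funext v
  by_cases hv : v = b
  · rw [hv, hp.1 b rfl, hq.1 b rfl]
  have hadj : (funGraph p).Adj v (q v) := h ▸ funGraph_adj.2 ⟨(hq.apply_ne hv).symm, .inl rfl⟩
  obtain ⟨-, hpq | hqp⟩ := funGraph_adj.1 hadj
  · exact hpq
  · have hqv : q v ≠ b := fun hqv => hv (by rw [← hqp, hqv, hp.1 b rfl])
    have h₁ := hp.height_apply hqv
    have h₂ := hq.height_apply hv
    rw [hqp, hheight, hheight] at h₁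
    omega

end IsRootedForest

lemma _root_.SimpleGraph.Connected.exists_adj_dist_lt {G : SimpleGraph α} (hG : G.Connected)
    {v b : α} (hv : v ≠ b) : ∃ w, G.Adj v w ∧ G.dist w b < G.dist v b := by
  obtain ⟨w, hw⟩ := (hG v b).exists_walk_length_eq_dist
  obtain ⟨x, hadj, w', rfl⟩ := Walk.exists_eq_cons_of_ne hv w
  exact ⟨x, hadj, (dist_le w').trans_lt (by simp [← hw])⟩

lemma exists_isRootedForest_funGraph_eq [Finite α] {T : SimpleGraph α} (hT : T.IsTree) (b : α) :
    ∃ p, IsRootedForest {b} p ∧ funGraph p = T := by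
  classical
  choose! parent hadj hdist using fun v (hv : v ≠ b) => hT.connected.exists_adj_dist_lt hv
  let p v := if v = b then b else parent v
  have hp : IsRootedForest {b} p := by
    refine ⟨fun z (hz : z = b) => by simp [p, hz], fun v => ?_⟩
    induction hn : T.dist v b using Nat.strong_induction_on generalizing v with | _ n ih => ?_
    by_cases hv : v = b
    · exact ⟨0, hv⟩
    obtain ⟨k, hk⟩ := ih _ (hn ▸ hdist v hv) (parent v) rfl
    exact ⟨k + 1, by rwa [iterate_succ_apply, show p v = parent v from if_neg hv]⟩
  have hle : funGraph p ≤ T := fun u w huw => by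
    obtain ⟨hne, huw | hwu⟩ := funGraph_adj.1 huw
    · have hu : u ≠ b := fun hu => hne (by simp [← huw, p, hu])
      rw [← huw, show p u = parent u from if_neg hu]
      exact hadj u hu
    · have hw : w ≠ b := fun hw => hne (by simp [← hwu, p, hw])
      rw [← hwu, show p w = parent w from if_neg hw]
      exact (hadj w hw).symm
  exact ⟨p, hp, (isTree_iff_maximal_isAcyclic.1 hp.isTree_funGraph).2.eq_of_le hT.isAcyclic hle⟩

noncomputable def rootedForestEquivTree [Finite α] (b : α) :
    {p : α → α // IsRootedForest {b} p} ≃ {T : SimpleGraph α // T.IsTree} :=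
  .ofBijective (fun p => ⟨funGraph p, p.2.isTree_funGraph⟩)
    ⟨fun p q h => Subtype.ext (p.2.eq_of_funGraph_eq q.2 (congrArg Subtype.val h)),
      fun T => let ⟨p, hp, hpT⟩ := exists_isRootedForest_funGraph_eq T.2 b
        ⟨⟨p, hp⟩, Subtype.ext hpT⟩⟩

end Trees

theorem card_isTree [Fintype α] [Nonempty α] :
    Nat.card {T : SimpleGraph α // T.IsTree} = Fintype.card α ^ (Fintype.card α - 2) := by
  classical
  have hcount := card_mul_sum_card_isRootedForest (α := α)
  simp only [Nat.card_congr (rootedForestEquivTree _), Finset.sum_const, Finset.card_univ,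
    smul_eq_mul] at hcount
  obtain ⟨n, hn⟩ := Nat.exists_eq_add_of_lt (Fintype.card_pos (α := α))
  rw [hn] at hcount ⊢
  rcases n with _ | n
  · simpa using hcount
  · rw [show 0 + (n + 1) + 1 = n + 2 by omega, pow_succ', pow_succ'] at hcount
    simpa using Nat.eq_of_mul_eq_mul_left (by omega) (Nat.eq_of_mul_eq_mul_left (by omega) hcount)

end Cayley

theorem stmt_15_general (n : ℕ) :
    Nat.card {H : SimpleGraph (Fin (n + 1)) //
        H ≤ (⊤ : SimpleGraph (Fin (n + 1))) ∧ H.IsTree} = (n + 1) ^ (n - 1) := by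
  rw [Nat.card_congr (Equiv.subtypeEquivRight fun H => and_iff_right (le_top (a := H))),
    Cayley.card_isTree, Fintype.card_fin, show n + 1 - 2 = n - 1 by omega]

/-- For every `n ≥ 1`, the number of spanning trees of the complete graph on
`n+1` vertices is `(n+1)^{n−1}`. A spanning tree is identified with a subgraph (on the same
vertex set, i.e. a graph `H ≤ ⊤` on the `n+1` vertices) which is a tree. -/
theorem stmt_15 (n : ℕ) (hn : 1 ≤ n) :
    Nat.card {H : SimpleGraph (Fin (n + 1)) //
        H ≤ (⊤ : SimpleGraph (Fin (n + 1))) ∧ H.IsTree} = (n + 1) ^ (n - 1) :=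
  stmt_15_general n
end
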